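/- arXiv:2008.11019 — 6 statements merged into one kernel-verified Lean document; each statement's English description precedes it below -/
import Mathlib

section
/- Under hypotheses (H1)–(H5), the scalar equation f₂(G) + q·G·f₄(τ₀·f₁(G)) = G_in + f₅(τ₀·f₁(G)) has exactly one solution G* with G* > 0. Consequently the delay system (MS) has exactly one positive equilibrium (I*, G*), where I* := τ₀·f₁(G*) > 0. -/
/-!
Eliminating `I` through `I = τ₀ f₁(G)` turns the equilibrium equations into `r(G) = G_in` with
`r(G) = f₂(G) + q G f₄(τ₀ f₁(G)) - f₅(τ₀ f₁(G))`. On `[0, ∞)` the function `r` is continuous and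
strictly increasing (`f₂` strictly increases, `f₁`, `f₄` increase and `f₅` decreases),
`r(0) = -f₅(τ₀ a₀) < G_in`, and `r(G) ≥ r(0) + q f₄(τ₀ a₀) G` grows without bound, so the
intermediate value theorem and injectivity give exactly one positive root.
-/

open Filter Set

section Calculus

variable {f f' : ℝ → ℝ} {a : ℝ}

lemma continuousOn_Ici_of_hasDerivAt (hd : ∀ u ≥ a, HasDerivAt f (f' u) u) :
    ContinuousOn f (Ici a) :=
  fun x hx => (hd x hx).continuousAt.continuousWithinAt

lemma strictMonoOn_Ici_of_hasDerivAt_pos (hd : ∀ u ≥ a, HasDerivAt f (f' u) u)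
    (hpos : ∀ u > a, 0 < f' u) : StrictMonoOn f (Ici a) := by
  refine strictMonoOn_of_deriv_pos (convex_Ici a) (continuousOn_Ici_of_hasDerivAt hd) ?_
  intro x hx
  rw [interior_Ici] at hx
  rw [(hd x (le_of_lt hx)).deriv]
  exact hpos x hx

lemma strictAntiOn_Ici_of_hasDerivAt_neg (hd : ∀ u ≥ a, HasDerivAt f (f' u) u)
    (hneg : ∀ u > a, f' u < 0) : StrictAntiOn f (Ici a) := by
  refine strictAntiOn_of_deriv_neg (convex_Ici a) (continuousOn_Ici_of_hasDerivAt hd) ?_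
  intro x hx
  rw [interior_Ici] at hx
  rw [(hd x (le_of_lt hx)).deriv]
  exact hneg x hx

end Calculus

lemma existsUnique_gt_of_strictMonoOn_Ici {g : ℝ → ℝ} {a y : ℝ} (hc : ContinuousOn g (Ici a))
    (hm : StrictMonoOn g (Ici a)) (htop : Tendsto g atTop atTop) (ha : g a < y) :
    ∃! x, a < x ∧ g x = y := by
  obtain ⟨x, hx, rfl⟩ := intermediate_value_Ici hc htop ha.le
  refine ⟨x, ⟨(mem_Ici.mp hx).lt_of_ne ?_, rfl⟩, fun x' ⟨hx', hgx'⟩ => hm.injOn hx'.le hx hgx'⟩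
  rintro rfl
  exact ha.ne rfl

def equilibriumResidual (τ0 q : ℝ) (f1 f2 f4 f5 : ℝ → ℝ) (G : ℝ) : ℝ :=
  f2 G + q * G * f4 (τ0 * f1 G) - f5 (τ0 * f1 G)

section EquilibriumResidual

variable {τ0 q : ℝ} {f1 f2 f4 f5 : ℝ → ℝ}

lemma equilibriumResidual_eq_iff {Gin G : ℝ} :
    equilibriumResidual τ0 q f1 f2 f4 f5 G = Gin ↔
      f2 G + q * G * f4 (τ0 * f1 G) = Gin + f5 (τ0 * f1 G) :=
  sub_eq_iff_eq_add

lemma mapsTo_const_mul_Ici (hτ0 : 0 ≤ τ0) (hf1nn : ∀ u ≥ (0:ℝ), 0 ≤ f1 u) :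
    MapsTo (fun G => τ0 * f1 G) (Ici 0) (Ici 0) :=
  fun G hG => mul_nonneg hτ0 (hf1nn G hG)

lemma monotoneOn_const_mul_Ici (hτ0 : 0 ≤ τ0) (hf1 : MonotoneOn f1 (Ici 0)) :
    MonotoneOn (fun G => τ0 * f1 G) (Ici 0) :=
  fun _ hx _ hy hxy => mul_le_mul_of_nonneg_left (hf1 hx hy hxy) hτ0

lemma continuousOn_equilibriumResidual (hτ0 : 0 ≤ τ0) (hf1nn : ∀ u ≥ (0:ℝ), 0 ≤ f1 u)
    (hf1 : ContinuousOn f1 (Ici 0)) (hf2 : ContinuousOn f2 (Ici 0))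
    (hf4 : ContinuousOn f4 (Ici 0)) (hf5 : ContinuousOn f5 (Ici 0)) :
    ContinuousOn (equilibriumResidual τ0 q f1 f2 f4 f5) (Ici 0) := by
  have hI : ContinuousOn (fun G => τ0 * f1 G) (Ici 0) := continuousOn_const.mul hf1
  have hmaps := mapsTo_const_mul_Ici hτ0 hf1nn
  exact (hf2.add ((continuousOn_const.mul continuousOn_id).mul (hf4.comp hI hmaps))).sub
    (hf5.comp hI hmaps)

lemma strictMonoOn_equilibriumResidual (hτ0 : 0 ≤ τ0) (hq : 0 ≤ q)
    (hf1nn : ∀ u ≥ (0:ℝ), 0 ≤ f1 u) (hf4nn : ∀ u ≥ (0:ℝ), 0 ≤ f4 u)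
    (hf1 : MonotoneOn f1 (Ici 0)) (hf2 : StrictMonoOn f2 (Ici 0))
    (hf4 : MonotoneOn f4 (Ici 0)) (hf5 : AntitoneOn f5 (Ici 0)) :
    StrictMonoOn (equilibriumResidual τ0 q f1 f2 f4 f5) (Ici 0) := by
  intro x hx y hy hxy
  have hmaps := mapsTo_const_mul_Ici hτ0 hf1nn
  have hI := monotoneOn_const_mul_Ici hτ0 hf1
  have h4 : f4 (τ0 * f1 x) ≤ f4 (τ0 * f1 y) := (hf4.comp hI hmaps) hx hy hxy.le
  have h5 : f5 (τ0 * f1 y) ≤ f5 (τ0 * f1 x) := (hf5.comp_MonotoneOn hI hmaps) hx hy hxy.le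
  have hmul : q * x * f4 (τ0 * f1 x) ≤ q * y * f4 (τ0 * f1 y) :=
    mul_le_mul (by gcongr) h4 (hf4nn _ (hmaps hx)) (mul_nonneg hq (hy : (0:ℝ) ≤ y))
  have h2 := hf2 hx hy hxy
  unfold equilibriumResidual
  linarith

lemma tendsto_equilibriumResidual_atTop (hτ0 : 0 ≤ τ0) (hq : 0 < q)
    (hf1nn : ∀ u ≥ (0:ℝ), 0 ≤ f1 u) (hf40 : 0 < f4 (τ0 * f1 0))
    (hf1 : MonotoneOn f1 (Ici 0)) (hf2 : MonotoneOn f2 (Ici 0))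
    (hf4 : MonotoneOn f4 (Ici 0)) (hf5 : AntitoneOn f5 (Ici 0)) :
    Tendsto (equilibriumResidual τ0 q f1 f2 f4 f5) atTop atTop := by
  have hmaps := mapsTo_const_mul_Ici hτ0 hf1nn
  have hI := monotoneOn_const_mul_Ici hτ0 hf1
  have hlin : ∀ G ≥ (0:ℝ), equilibriumResidual τ0 q f1 f2 f4 f5 0 + q * f4 (τ0 * f1 0) * G ≤
      equilibriumResidual τ0 q f1 f2 f4 f5 G := by
    intro G hG
    have h0 : (0:ℝ) ∈ Ici 0 := self_mem_Ici
    have h2 : f2 0 ≤ f2 G := hf2 h0 hG hG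
    have h4 : f4 (τ0 * f1 0) ≤ f4 (τ0 * f1 G) := (hf4.comp hI hmaps) h0 hG hG
    have h5 : f5 (τ0 * f1 G) ≤ f5 (τ0 * f1 0) := (hf5.comp_MonotoneOn hI hmaps) h0 hG hG
    have hmul : q * G * f4 (τ0 * f1 0) ≤ q * G * f4 (τ0 * f1 G) :=
      mul_le_mul_of_nonneg_left h4 (mul_nonneg hq.le hG)
    unfold equilibriumResidual
    linarith
  exact tendsto_atTop_mono' _ ((eventually_ge_atTop 0).mono hlin)
    (tendsto_atTop_add_const_left _ _ (tendsto_id.const_mul_atTop (mul_pos hq hf40)))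

end EquilibriumResidual

lemma existsUnique_pos_pair_of_existsUnique_pos {τ0 : ℝ} {f1 : ℝ → ℝ} {Q : ℝ → ℝ → Prop}
    (hτ0 : 0 < τ0) (hf1pos : ∀ u > (0:ℝ), 0 < f1 u)
    (h : ∃! G : ℝ, 0 < G ∧ Q (τ0 * f1 G) G) :
    ∃! p : ℝ × ℝ, 0 < p.1 ∧ 0 < p.2 ∧ f1 p.2 = p.1 / τ0 ∧ Q p.1 p.2 := by
  obtain ⟨G, ⟨hG, hQ⟩, huniq⟩ := h
  refine ⟨(τ0 * f1 G, G), ⟨mul_pos hτ0 (hf1pos G hG), hG, by field_simp, hQ⟩, ?_⟩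
  rintro ⟨I, G'⟩ ⟨-, hG', hI, hQ'⟩
  obtain rfl : I = τ0 * f1 G' := by rw [hI]; field_simp
  obtain rfl : G' = G := huniq G' ⟨hG', hQ'⟩
  rfl

theorem unique_positive_equilibrium_general
    (τ0 Gin q a0 : ℝ)
    (f1 f2 f4 f5 f1' f2' f4' f5' : ℝ → ℝ)
    (hτ0 : 0 < τ0) (hGin : 0 < Gin) (hq : 0 < q)
    (hf1nn : ∀ u ≥ (0:ℝ), 0 ≤ f1 u)
    (hf4nn : ∀ u ≥ (0:ℝ), 0 ≤ f4 u) (hf5nn : ∀ u ≥ (0:ℝ), 0 ≤ f5 u)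
    (hf1d : ∀ u ≥ (0:ℝ), HasDerivAt f1 (f1' u) u)
    (hf2d : ∀ u ≥ (0:ℝ), HasDerivAt f2 (f2' u) u)
    (hf4d : ∀ u ≥ (0:ℝ), HasDerivAt f4 (f4' u) u)
    (hf5d : ∀ u ≥ (0:ℝ), HasDerivAt f5 (f5' u) u)
    (hf1pos : ∀ u > (0:ℝ), 0 < f1 u) (hf1inc : ∀ u > (0:ℝ), 0 < f1' u)
    (hf10 : f1 0 = a0) (ha0 : 0 < a0)
    (hf2inc : ∀ u > (0:ℝ), 0 < f2' u)
    (hf20 : f2 0 = 0)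
    (hf4pos : ∀ u > (0:ℝ), 0 < f4 u) (hf4inc : ∀ u > (0:ℝ), 0 < f4' u)
    (hf5dec : ∀ u > (0:ℝ), f5' u < 0) :
    (∃! Gs : ℝ, 0 < Gs ∧ f2 Gs + q * Gs * f4 (τ0 * f1 Gs) = Gin + f5 (τ0 * f1 Gs)) ∧
    (∃! p : ℝ × ℝ, 0 < p.1 ∧ 0 < p.2 ∧ f1 p.2 = p.1 / τ0 ∧
      f2 p.2 + q * p.2 * f4 p.1 = Gin + f5 p.1) := by
  have hf1 := strictMonoOn_Ici_of_hasDerivAt_pos hf1d hf1inc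
  have hf2 := strictMonoOn_Ici_of_hasDerivAt_pos hf2d hf2inc
  have hf4 := strictMonoOn_Ici_of_hasDerivAt_pos hf4d hf4inc
  have hf5 := strictAntiOn_Ici_of_hasDerivAt_neg hf5d hf5dec
  have hI0 : 0 < τ0 * f1 0 := hf10 ▸ mul_pos hτ0 ha0
  have hr0 : equilibriumResidual τ0 q f1 f2 f4 f5 0 < Gin := by
    have := hf5nn _ hI0.le
    simp only [equilibriumResidual, hf20, mul_zero, zero_mul, zero_add]
    linarith
  have hscalar : ∃! G, 0 < G ∧ f2 G + q * G * f4 (τ0 * f1 G) = Gin + f5 (τ0 * f1 G) := by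
    simpa only [equilibriumResidual_eq_iff] using existsUnique_gt_of_strictMonoOn_Ici
      (continuousOn_equilibriumResidual hτ0.le hf1nn (continuousOn_Ici_of_hasDerivAt hf1d)
        (continuousOn_Ici_of_hasDerivAt hf2d) (continuousOn_Ici_of_hasDerivAt hf4d)
        (continuousOn_Ici_of_hasDerivAt hf5d))
      (strictMonoOn_equilibriumResidual hτ0.le hq.le hf1nn hf4nn hf1.monotoneOn hf2
        hf4.monotoneOn hf5.antitoneOn)
      (tendsto_equilibriumResidual_atTop hτ0.le hq hf1nn (hf4pos _ hI0) hf1.monotoneOn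
        hf2.monotoneOn hf4.monotoneOn hf5.antitoneOn)
      hr0
  exact ⟨hscalar, existsUnique_pos_pair_of_existsUnique_pos
    (Q := fun I G => f2 G + q * G * f4 I = Gin + f5 I) hτ0 hf1pos hscalar⟩

/-- Under (H1)-(H5), the equation f₂(G) + q·G·f₄(τ₀·f₁(G)) = G_in + f₅(τ₀·f₁(G)) has a
unique positive solution G*, and the delay system (MS) has exactly one positive
equilibrium (I*, G*) with I* = τ₀·f₁(G*). -/
theorem unique_positive_equilibrium
    (τ0 Gin q τ a0 a bbar d e hh : ℝ)
    (f1 f2 f4 f5 f1' f2' f4' f5' : ℝ → ℝ)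
    (hτ0 : 0 < τ0) (hGin : 0 < Gin) (hq : 0 < q) (hτ : 0 < τ)
    (hf1nn : ∀ u ≥ (0:ℝ), 0 ≤ f1 u) (hf2nn : ∀ u ≥ (0:ℝ), 0 ≤ f2 u)
    (hf4nn : ∀ u ≥ (0:ℝ), 0 ≤ f4 u) (hf5nn : ∀ u ≥ (0:ℝ), 0 ≤ f5 u)
    (hf1d : ∀ u ≥ (0:ℝ), HasDerivAt f1 (f1' u) u) (hf1c : ContinuousOn f1' (Set.Ici 0))
    (hf2d : ∀ u ≥ (0:ℝ), HasDerivAt f2 (f2' u) u) (hf2c : ContinuousOn f2' (Set.Ici 0))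
    (hf4d : ∀ u ≥ (0:ℝ), HasDerivAt f4 (f4' u) u) (hf4c : ContinuousOn f4' (Set.Ici 0))
    (hf5d : ∀ u ≥ (0:ℝ), HasDerivAt f5 (f5' u) u) (hf5c : ContinuousOn f5' (Set.Ici 0))
    (hf1pos : ∀ u > (0:ℝ), 0 < f1 u) (hf1inc : ∀ u > (0:ℝ), 0 < f1' u)
    (hf10 : f1 0 = a0) (ha0 : 0 < a0) (ha : 0 < a)
    (hf1lim : Filter.Tendsto f1 Filter.atTop (nhds a))
    (hf2pos : ∀ u > (0:ℝ), 0 < f2 u) (hf2inc : ∀ u > (0:ℝ), 0 < f2' u)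
    (hf20 : f2 0 = 0) (hbbar : 0 < bbar)
    (hf2lim : Filter.Tendsto f2 Filter.atTop (nhds bbar))
    (hf4pos : ∀ u > (0:ℝ), 0 < f4 u) (hf4inc : ∀ u > (0:ℝ), 0 < f4' u)
    (hf40 : f4 0 = d) (hd : 0 < d) (he : 0 < e)
    (hf4lim : Filter.Tendsto f4 Filter.atTop (nhds e))
    (hf5pos : ∀ u > (0:ℝ), 0 < f5 u) (hf5dec : ∀ u > (0:ℝ), f5' u < 0)
    (hf50 : f5 0 = hh) (hhh : 0 < hh)
    (hf5lim : Filter.Tendsto f5 Filter.atTop (nhds 0)) :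
    (∃! Gs : ℝ, 0 < Gs ∧ f2 Gs + q * Gs * f4 (τ0 * f1 Gs) = Gin + f5 (τ0 * f1 Gs)) ∧
    (∃! p : ℝ × ℝ, 0 < p.1 ∧ 0 < p.2 ∧ f1 p.2 = p.1 / τ0 ∧
      f2 p.2 + q * p.2 * f4 p.1 = Gin + f5 p.1) :=
  unique_positive_equilibrium_general τ0 Gin q a0 f1 f2 f4 f5 f1' f2' f4' f5' hτ0 hGin hq hf1nn
    hf4nn hf5nn hf1d hf2d hf4d hf5d hf1pos hf1inc hf10 ha0 hf2inc hf20 hf4pos hf4inc hf5dec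
end

section
/- Under hypotheses (H1)–(H5), define L₀ := [Φ_∞, Φ₀] and L_{n+1} := Φ(L_n) (the image of L_n under Φ). Then each L_n is a closed bounded interval containing G*, L_{n+1} ⊆ L_n for all n, and the intersection L* := ∩_{n≥0} L_n is a closed interval [α*, β*] with Φ(α*) = β*, Φ(β*) = α*, and α* ≤ G* ≤ β*. Moreover exactly one of the following holds: either α* = β* = G*, or α* < G* < β* and {α*, β*} is a cycle of period two of Φ. -/
open Filter Set

/-- strict monotonicity from positive derivative on `Ici 0`. -/
theorem aux_sm (f f' : ℝ → ℝ) (hd : ∀ u ≥ (0:ℝ), HasDerivAt f (f' u) u)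
    (hp : ∀ u > (0:ℝ), 0 < f' u) : StrictMonoOn f (Set.Ici 0) := by
  apply strictMonoOn_of_deriv_pos (convex_Ici 0)
  · exact fun x hx => (hd x hx).continuousAt.continuousWithinAt
  · intro x hx
    rw [interior_Ici] at hx
    rw [(hd x hx.le).deriv]
    exact hp x hx

theorem aux_sa (f f' : ℝ → ℝ) (hd : ∀ u ≥ (0:ℝ), HasDerivAt f (f' u) u)
    (hp : ∀ u > (0:ℝ), f' u < 0) : StrictAntiOn f (Set.Ici 0) := by
  apply strictAntiOn_of_deriv_neg (convex_Ici 0)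
  · exact fun x hx => (hd x hx).continuousAt.continuousWithinAt
  · intro x hx
    rw [interior_Ici] at hx
    rw [(hd x hx.le).deriv]
    exact hp x hx

/-- The squeezing sequence of intervals Lₙ for the interval map Φ and the structure of
its limiting set L* = [α*, β*]. -/
theorem limiting_set_structure
    (τ0 Gin q τ a0 a bbar d e hh : ℝ)
    (f1 f2 f4 f5 f1' f2' f4' f5' : ℝ → ℝ)
    (hτ0 : 0 < τ0) (hGin : 0 < Gin) (hq : 0 < q) (hτ : 0 < τ)
    (hf1nn : ∀ u ≥ (0:ℝ), 0 ≤ f1 u) (hf2nn : ∀ u ≥ (0:ℝ), 0 ≤ f2 u)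
    (hf4nn : ∀ u ≥ (0:ℝ), 0 ≤ f4 u) (hf5nn : ∀ u ≥ (0:ℝ), 0 ≤ f5 u)
    (hf1d : ∀ u ≥ (0:ℝ), HasDerivAt f1 (f1' u) u) (hf1c : ContinuousOn f1' (Set.Ici 0))
    (hf2d : ∀ u ≥ (0:ℝ), HasDerivAt f2 (f2' u) u) (hf2c : ContinuousOn f2' (Set.Ici 0))
    (hf4d : ∀ u ≥ (0:ℝ), HasDerivAt f4 (f4' u) u) (hf4c : ContinuousOn f4' (Set.Ici 0))
    (hf5d : ∀ u ≥ (0:ℝ), HasDerivAt f5 (f5' u) u) (hf5c : ContinuousOn f5' (Set.Ici 0))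
    (hf1pos : ∀ u > (0:ℝ), 0 < f1 u) (hf1inc : ∀ u > (0:ℝ), 0 < f1' u)
    (hf10 : f1 0 = a0) (ha0 : 0 < a0) (ha : 0 < a)
    (hf1lim : Filter.Tendsto f1 Filter.atTop (nhds a))
    (hf2pos : ∀ u > (0:ℝ), 0 < f2 u) (hf2inc : ∀ u > (0:ℝ), 0 < f2' u)
    (hf20 : f2 0 = 0) (hbbar : 0 < bbar)
    (hf2lim : Filter.Tendsto f2 Filter.atTop (nhds bbar))
    (hf4pos : ∀ u > (0:ℝ), 0 < f4 u) (hf4inc : ∀ u > (0:ℝ), 0 < f4' u)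
    (hf40 : f4 0 = d) (hd : 0 < d) (he : 0 < e)
    (hf4lim : Filter.Tendsto f4 Filter.atTop (nhds e))
    (hf5pos : ∀ u > (0:ℝ), 0 < f5 u) (hf5dec : ∀ u > (0:ℝ), f5' u < 0)
    (hf50 : f5 0 = hh) (hhh : 0 < hh)
    (hf5lim : Filter.Tendsto f5 Filter.atTop (nhds 0))
    (Gs : ℝ) (hGspos : 0 < Gs)
    (hGseq : f2 Gs + q * Gs * f4 (τ0 * f1 Gs) = Gin + f5 (τ0 * f1 Gs))
    (Φ : ℝ → ℝ)
    (hΦ : ∀ u ≥ (0:ℝ), 0 ≤ Φ u ∧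
      f2 (Φ u) + q * Φ u * f4 (τ0 * f1 (Φ u)) = Gin + f5 (τ0 * f1 u))
    (Φz Φinf : ℝ)
    (hΦz : 0 ≤ Φz ∧ f2 Φz + q * Φz * f4 (τ0 * f1 Φz) = Gin + f5 (τ0 * a0))
    (hΦinf : 0 ≤ Φinf ∧ f2 Φinf + q * Φinf * f4 (τ0 * f1 Φinf) = Gin + f5 (τ0 * a))
    (L : ℕ → Set ℝ) (hL0 : L 0 = Set.Icc Φinf Φz) (hLsucc : ∀ n, L (n + 1) = Φ '' L n) :
    (∀ n : ℕ, ∃ an bn : ℝ, an ≤ bn ∧ L n = Set.Icc an bn ∧ Gs ∈ L n) ∧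
    (∀ n : ℕ, L (n + 1) ⊆ L n) ∧
    ∃ αs βs : ℝ, αs ≤ βs ∧ (⋂ n : ℕ, L n) = Set.Icc αs βs ∧
      Φ αs = βs ∧ Φ βs = αs ∧ αs ≤ Gs ∧ Gs ≤ βs ∧
      ((αs = Gs ∧ βs = Gs) ∨ (αs < Gs ∧ Gs < βs ∧ αs ≠ βs)) := by
  -- monotonicity of the building blocks
  have hf1m := aux_sm f1 f1' hf1d hf1inc
  have hf2m := aux_sm f2 f2' hf2d hf2inc
  have hf4m := aux_sm f4 f4' hf4d hf4inc
  have hf5a := aux_sa f5 f5' hf5d hf5dec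
  -- f1 is positive on [0,∞)
  have hf1pos' : ∀ u ≥ (0:ℝ), 0 < f1 u := by
    intro u hu
    rcases eq_or_lt_of_le hu with h | h
    · rw [← h, hf10]; exact ha0
    · exact hf1pos u h
  -- f1 u < a on [0,∞)
  have hf1lt : ∀ u ≥ (0:ℝ), f1 u < a := by
    intro u hu
    have h1 : f1 u < f1 (u + 1) := hf1m hu (by linarith : (0:ℝ) ≤ u + 1) (by linarith)
    have h2 : f1 (u + 1) ≤ a := by
      apply ge_of_tendsto hf1lim
      filter_upwards [eventually_ge_atTop (u + 2)] with y hy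
      exact (hf1m (by linarith : (0:ℝ) ≤ u + 1) (by linarith : (0:ℝ) ≤ y) (by linarith)).le
    linarith
  have haa0 : a0 < a := by
    have := hf1lt 0 le_rfl; rwa [hf10] at this
  -- the function F
  set Fn : ℝ → ℝ := fun G => f2 G + q * G * f4 (τ0 * f1 G) with hFdef
  have hFm : StrictMonoOn Fn (Set.Ici 0) := by
    intro x hx y hy hxy
    simp only [Set.mem_Ici] at hx hy
    have h1x : 0 < f1 x := hf1pos' x hx
    have h1y : 0 < f1 y := hf1pos' y hy
    have h2 : f2 x < f2 y := hf2m hx hy hxy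
    have hτx : (0:ℝ) ≤ τ0 * f1 x := by positivity
    have hτy : (0:ℝ) ≤ τ0 * f1 y := by positivity
    have h4 : f4 (τ0 * f1 x) ≤ f4 (τ0 * f1 y) := by
      apply hf4m.monotoneOn (Set.mem_Ici.mpr hτx) (Set.mem_Ici.mpr hτy)
      exact mul_le_mul_of_nonneg_left (hf1m hx hy hxy).le hτ0.le
    have h5 : q * x * f4 (τ0 * f1 x) ≤ q * y * f4 (τ0 * f1 y) := by
      apply mul_le_mul (by nlinarith) h4 (hf4nn _ hτx) (by positivity)
    simp only [hFdef]
    linarith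
  have hFinj : ∀ x ≥ (0:ℝ), ∀ y ≥ (0:ℝ), Fn x = Fn y → x = y :=
    fun x hx y hy h => hFm.injOn hx hy h
  have hFltiff : ∀ x ≥ (0:ℝ), ∀ y ≥ (0:ℝ), Fn x < Fn y → x < y := by
    intro x hx y hy h
    by_contra hc
    push_neg at hc
    rcases eq_or_lt_of_le hc with h' | h'
    · rw [h'] at h; exact lt_irrefl _ h
    · exact absurd (hFm hy hx h') (not_lt.mpr h.le)
  -- the function H
  set Hn : ℝ → ℝ := fun u => Gin + f5 (τ0 * f1 u) with hHdef
  have hkey : ∀ u ≥ (0:ℝ), Fn (Φ u) = Hn u := fun u hu => (hΦ u hu).2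
  have hΦnn : ∀ u ≥ (0:ℝ), 0 ≤ Φ u := fun u hu => (hΦ u hu).1
  -- H is strictly decreasing on [0,∞)
  have hHa : ∀ x ≥ (0:ℝ), ∀ y, x < y → Hn y < Hn x := by
    intro x hx y hxy
    have h1x : 0 < f1 x := hf1pos' x hx
    have hy0 : y ∈ Set.Ici (0:ℝ) := Set.mem_Ici.mpr (by linarith)
    have h1 : τ0 * f1 x < τ0 * f1 y :=
      mul_lt_mul_of_pos_left (hf1m hx hy0 hxy) hτ0
    have hm1 : τ0 * f1 x ∈ Set.Ici (0:ℝ) := Set.mem_Ici.mpr (by positivity)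
    have hm2 : τ0 * f1 y ∈ Set.Ici (0:ℝ) := Set.mem_Ici.mpr (le_trans (by positivity) h1.le)
    have h5 : f5 (τ0 * f1 y) < f5 (τ0 * f1 x) := hf5a hm1 hm2 h1
    simp only [hHdef]
    linarith
  -- Φ is strictly decreasing on [0,∞)
  have hΦsa : ∀ x ≥ (0:ℝ), ∀ y, x < y → Φ y < Φ x := by
    intro x hx y hxy
    have hy : (0:ℝ) ≤ y := le_trans hx hxy.le
    apply hFltiff _ (hΦnn y hy) _ (hΦnn x hx)
    rw [hkey x hx, hkey y hy]
    exact hHa x hx y hxy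
  have hΦanti : ∀ x ≥ (0:ℝ), ∀ y, x ≤ y → Φ y ≤ Φ x := by
    intro x hx y hxy
    rcases eq_or_lt_of_le hxy with h | h
    · rw [h]
    · exact (hΦsa x hx y h).le
  -- Φ 0 = Φz
  have hΦ0 : Φ 0 = Φz := by
    apply hFinj _ (hΦnn 0 le_rfl) _ hΦz.1
    rw [hkey 0 le_rfl]
    simp only [hHdef]
    rw [hf10]
    exact hΦz.2.symm
  -- Φ Gs = Gs
  have hΦGs : Φ Gs = Gs := by
    apply hFinj _ (hΦnn Gs hGspos.le) _ hGspos.le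
    rw [hkey Gs hGspos.le]
    simp only [hHdef, hFdef]
    exact hGseq.symm
  -- Φ u > Φinf for all u ≥ 0
  have hΦgt : ∀ u ≥ (0:ℝ), Φinf < Φ u := by
    intro u hu
    apply hFltiff _ hΦinf.1 _ (hΦnn u hu)
    rw [hkey u hu]
    have h1 : τ0 * f1 u < τ0 * a := mul_lt_mul_of_pos_left (hf1lt u hu) hτ0
    have hm1 : τ0 * f1 u ∈ Set.Ici (0:ℝ) :=
      Set.mem_Ici.mpr (by have := hf1pos' u hu; positivity)
    have hm2 : τ0 * a ∈ Set.Ici (0:ℝ) := Set.mem_Ici.mpr (by positivity)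
    have h5 : f5 (τ0 * a) < f5 (τ0 * f1 u) := hf5a hm1 hm2 h1
    have : Fn Φinf = Gin + f5 (τ0 * a) := hΦinf.2
    rw [this]
    simp only [hHdef]
    linarith
  -- Φ u ≤ Φz for all u ≥ 0
  have hΦle : ∀ u ≥ (0:ℝ), Φ u ≤ Φz := by
    intro u hu
    rw [← hΦ0]
    exact hΦanti 0 le_rfl u hu
  have hΦinfnn : (0:ℝ) ≤ Φinf := hΦinf.1
  have hΦinfGs : Φinf < Gs := by rw [← hΦGs]; exact hΦgt Gs hGspos.le
  have hGsΦz : Gs ≤ Φz := by rw [← hΦGs]; exact hΦle Gs hGspos.le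
  -- continuity facts
  have hf1ct : ∀ u ≥ (0:ℝ), ContinuousAt f1 u := fun u hu => (hf1d u hu).continuousAt
  have hf2ct : ∀ u ≥ (0:ℝ), ContinuousAt f2 u := fun u hu => (hf2d u hu).continuousAt
  have hf4ct : ∀ u ≥ (0:ℝ), ContinuousAt f4 u := fun u hu => (hf4d u hu).continuousAt
  have hf5ct : ∀ u ≥ (0:ℝ), ContinuousAt f5 u := fun u hu => (hf5d u hu).continuousAt
  have hHct : ∀ u ≥ (0:ℝ), ContinuousAt Hn u := by
    intro u hu
    have h1 : ContinuousAt (fun x => τ0 * f1 x) u := continuousAt_const.mul (hf1ct u hu)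
    have h2 : ContinuousAt (fun x => f5 (τ0 * f1 x)) u :=
      ContinuousAt.comp (g := f5) (hf5ct _ (by have := hf1pos' u hu; positivity)) h1
    exact continuousAt_const.add h2
  have hFct : ∀ u ≥ (0:ℝ), ContinuousAt Fn u := by
    intro u hu
    have h1 : ContinuousAt (fun x => τ0 * f1 x) u := continuousAt_const.mul (hf1ct u hu)
    have h2 : ContinuousAt (fun x => f4 (τ0 * f1 x)) u :=
      ContinuousAt.comp (g := f4) (hf4ct _ (by have := hf1pos' u hu; positivity)) h1
    exact (hf2ct u hu).add ((continuousAt_const.mul continuousAt_id).mul h2)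
  -- image of an interval under Φ
  have himg : ∀ x ≥ (0:ℝ), ∀ y, x ≤ y → Φ '' Set.Icc x y = Set.Icc (Φ y) (Φ x) := by
    intro x hx y hxy
    apply Set.Subset.antisymm
    · rintro z ⟨w, hw, rfl⟩
      exact ⟨hΦanti w (le_trans hx hw.1) y hw.2, hΦanti x hx w hw.1⟩
    · rintro z ⟨hz1, hz2⟩
      have hy : (0:ℝ) ≤ y := le_trans hx hxy
      have hznn : (0:ℝ) ≤ z := le_trans (hΦnn y hy) hz1
      have hHcont : ContinuousOn Hn (Set.Icc x y) :=
        fun w hw => ((hHct w (le_trans hx hw.1)).continuousWithinAt)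
      have hFz : Fn z ∈ Set.Icc (Hn y) (Hn x) := by
        constructor
        · rw [← hkey y hy]
          rcases eq_or_lt_of_le hz1 with h | h
          · rw [h]
          · exact (hFm (hΦnn y hy) hznn h).le
        · rw [← hkey x hx]
          rcases eq_or_lt_of_le hz2 with h | h
          · rw [← h]
          · exact (hFm hznn (hΦnn x hx) h).le
      obtain ⟨w, hw, hweq⟩ := intermediate_value_Icc' hxy hHcont hFz
      refine ⟨w, hw, ?_⟩
      apply hFinj _ (hΦnn w (le_trans hx hw.1)) _ hznn
      rw [hkey w (le_trans hx hw.1), hweq]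
  -- the sequences of endpoints
  set p : ℕ → ℝ × ℝ :=
    fun n => Nat.rec (Φinf, Φz) (fun _ ih => (Φ ih.2, Φ ih.1)) n with hpdef
  set A : ℕ → ℝ := fun n => (p n).1 with hAdef
  set B : ℕ → ℝ := fun n => (p n).2 with hBdef
  have hA0 : A 0 = Φinf := rfl
  have hB0 : B 0 = Φz := rfl
  have hAs : ∀ n, A (n + 1) = Φ (B n) := fun n => rfl
  have hBs : ∀ n, B (n + 1) = Φ (A n) := fun n => rfl
  -- the main invariant
  have hinv : ∀ n, Φinf ≤ A n ∧ A n ≤ Gs ∧ Gs ≤ B n ∧ B n ≤ Φz ∧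
      A n ≤ A (n + 1) ∧ B (n + 1) ≤ B n ∧ L n = Set.Icc (A n) (B n) := by
    intro n
    induction n with
    | zero =>
      refine ⟨le_rfl, hΦinfGs.le, hGsΦz, le_rfl, ?_, ?_, ?_⟩
      · rw [hAs 0, hA0, hB0]
        exact (hΦgt Φz hΦz.1).le
      · rw [hBs 0, hA0, hB0, ← hΦ0]
        exact hΦanti 0 le_rfl Φinf hΦinfnn
      · rw [hL0, hA0, hB0]
    | succ n ih =>
      obtain ⟨h1, h2, h3, h4, h5, h6, h7⟩ := ih
      have hAnn : (0:ℝ) ≤ A n := le_trans hΦinfnn h1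
      have hBnn : (0:ℝ) ≤ B n := le_trans hGspos.le h3
      have e1 : Φinf ≤ A (n + 1) := by rw [hAs]; exact (hΦgt (B n) hBnn).le
      have e2 : A (n + 1) ≤ Gs := by
        rw [hAs, ← hΦGs]; exact hΦanti Gs hGspos.le (B n) h3
      have e3 : Gs ≤ B (n + 1) := by
        rw [hBs, ← hΦGs]; exact hΦanti (A n) hAnn Gs h2
      have e4 : B (n + 1) ≤ Φz := by rw [hBs]; exact hΦle (A n) hAnn
      refine ⟨e1, e2, e3, e4, ?_, ?_, ?_⟩
      · show Φ (B n) ≤ Φ (B (n + 1))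
        exact hΦanti (B (n + 1)) (le_trans hGspos.le e3) (B n) h6
      · show Φ (A (n + 1)) ≤ Φ (A n)
        exact hΦanti (A n) hAnn (A (n + 1)) h5
      · rw [hLsucc, h7, himg (A n) hAnn (B n) (le_trans h2 h3), hAs, hBs]
  have hAmono : Monotone A := monotone_nat_of_le_succ fun n => (hinv n).2.2.2.2.1
  have hBanti : Antitone B := antitone_nat_of_succ_le fun n => (hinv n).2.2.2.2.2.1
  have hAbdd : BddAbove (Set.range A) := ⟨Gs, by rintro x ⟨n, rfl⟩; exact (hinv n).2.1⟩
  have hBbdd : BddBelow (Set.range B) := ⟨Gs, by rintro x ⟨n, rfl⟩; exact (hinv n).2.2.1⟩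
  set αs : ℝ := ⨆ n, A n with hαdef
  set βs : ℝ := ⨅ n, B n with hβdef
  have hAle : ∀ n, A n ≤ αs := fun n => le_ciSup hAbdd n
  have hBle : ∀ n, βs ≤ B n := fun n => ciInf_le hBbdd n
  have hαGs : αs ≤ Gs := ciSup_le fun n => (hinv n).2.1
  have hGsβ : Gs ≤ βs := le_ciInf fun n => (hinv n).2.2.1
  have hαβ : αs ≤ βs := le_trans hαGs hGsβ
  have hαnn : (0:ℝ) ≤ αs := le_trans (le_trans hΦinfnn (hinv 0).1) (hAle 0)
  have hβnn : (0:ℝ) ≤ βs := le_trans hGspos.le hGsβ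
  have hAtend : Tendsto A atTop (nhds αs) := tendsto_atTop_ciSup hAmono hAbdd
  have hBtend : Tendsto B atTop (nhds βs) := tendsto_atTop_ciInf hBanti hBbdd
  -- Φ αs = βs
  have hΦα : Φ αs = βs := by
    apply hFinj _ (hΦnn αs hαnn) _ hβnn
    have t1 : Tendsto (fun n => Hn (A n)) atTop (nhds (Hn αs)) :=
      (hHct αs hαnn).tendsto.comp hAtend
    have t2 : Tendsto (fun n => Fn (B (n + 1))) atTop (nhds (Fn βs)) :=
      (hFct βs hβnn).tendsto.comp (hBtend.comp (tendsto_add_atTop_nat 1))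
    have heq : (fun n => Hn (A n)) = fun n => Fn (B (n + 1)) := by
      funext n
      rw [hBs, hkey (A n) (le_trans hΦinfnn (hinv n).1)]
    rw [heq] at t1
    rw [hkey αs hαnn]
    exact tendsto_nhds_unique t1 t2
  have hΦβ : Φ βs = αs := by
    apply hFinj _ (hΦnn βs hβnn) _ hαnn
    have t1 : Tendsto (fun n => Hn (B n)) atTop (nhds (Hn βs)) :=
      (hHct βs hβnn).tendsto.comp hBtend
    have t2 : Tendsto (fun n => Fn (A (n + 1))) atTop (nhds (Fn αs)) :=
      (hFct αs hαnn).tendsto.comp (hAtend.comp (tendsto_add_atTop_nat 1))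
    have heq : (fun n => Hn (B n)) = fun n => Fn (A (n + 1)) := by
      funext n
      rw [hAs, hkey (B n) (le_trans hGspos.le (hinv n).2.2.1)]
    rw [heq] at t1
    rw [hkey βs hβnn]
    exact tendsto_nhds_unique t1 t2
  -- intersection
  have hInter : (⋂ n : ℕ, L n) = Set.Icc αs βs := by
    ext x
    simp only [Set.mem_iInter, Set.mem_Icc]
    constructor
    · intro h
      have h' : ∀ n, A n ≤ x ∧ x ≤ B n := by
        intro n
        have := h n
        rw [(hinv n).2.2.2.2.2.2] at this
        exact this
      exact ⟨ciSup_le fun n => (h' n).1, le_ciInf fun n => (h' n).2⟩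
    · intro ⟨h1, h2⟩ n
      rw [(hinv n).2.2.2.2.2.2]
      exact ⟨le_trans (hAle n) h1, le_trans h2 (hBle n)⟩
  -- assemble
  refine ⟨?_, ?_, αs, βs, hαβ, hInter, hΦα, hΦβ, hαGs, hGsβ, ?_⟩
  · intro n
    refine ⟨A n, B n, le_trans (hinv n).2.1 (hinv n).2.2.1, (hinv n).2.2.2.2.2.2, ?_⟩
    rw [(hinv n).2.2.2.2.2.2]
    exact ⟨(hinv n).2.1, (hinv n).2.2.1⟩
  · intro n
    rw [(hinv n).2.2.2.2.2.2, (hinv (n + 1)).2.2.2.2.2.2]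
    apply Set.Icc_subset_Icc (hinv n).2.2.2.2.1 (hinv n).2.2.2.2.2.1
  · rcases eq_or_lt_of_le hαβ with h | h
    · left
      constructor
      · exact le_antisymm hαGs (by rw [h] at hαGs ⊢; exact hGsβ)
      · exact le_antisymm (h ▸ hαGs) hGsβ
    · right
      have hαne : αs ≠ Gs := by
        intro hc
        rw [hc] at hΦα
        rw [hΦGs] at hΦα
        rw [hc, ← hΦα] at h
        exact lt_irrefl _ h
      have hαlt : αs < Gs := lt_of_le_of_ne hαGs hαne
      have hGlt : Gs < βs := by
        rw [← hΦα, ← hΦGs]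
        exact hΦsa αs hαnn Gs hαlt
      exact ⟨hαlt, hGlt, ne_of_lt h⟩
end

section
/- Let F : L → L be a continuous map of a closed interval L ⊆ ℝ into itself, let x* ∈ L be a fixed point of F, and let J ⊆ L be an open (in L) interval with x* ∈ J, F(J) ⊆ J, and Fⁿ(x) → x* as n → ∞ for every x ∈ J. Then for every x ∈ J there exists a closed bounded interval L₀ ⊆ J such that x ∈ L₀, F(L₀) ⊆ L₀, and ∩_{n≥0} Fⁿ(L₀) = {x*}. -/
/-!
Every iterate `F^[k]`, `k ≥ 1`, moves each point of `J ∖ {x*}` strictly towards `x*`: otherwise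
the intermediate value theorem would trap its orbit on one side of `x*`, away from it. Hence
`[min F([x*, q]), q]` is invariant for every `q ≥ x*` in `J` (and symmetrically), and the compact
set `K = ⋂ Fⁿ([a, b])`, which satisfies `K ⊆ F(K)`, must be `{x*}`: if `max K > x*` then
`min K < x*`, and tracing `min K` back two steps through `[·, x*)` contradicts the fact that `F²`
pushes points below `x*` upwards.
-/

open Filter Set Topology Function

theorem Function.IsFixedPt.eq_of_tendsto_iterate {X : Type*} [TopologicalSpace X] [T2Space X]
    {f : X → X} {z c : X} (hz : IsFixedPt f z) (h : Tendsto (fun n => f^[n] z) atTop (𝓝 c)) :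
    z = c :=
  tendsto_nhds_unique (tendsto_const_nhds.congr fun n => (iterate_fixed hz n).symm) h

theorem iInter_image_iterate_subset_image {X : Type*} [TopologicalSpace X] [T2Space X]
    {f : X → X} {s : Set X} (hs : IsCompact s) (hf : ContinuousOn f s) (hmaps : MapsTo f s s) :
    ⋂ n, f^[n] '' s ⊆ f '' ⋂ n, f^[n] '' s := by
  intro z hz
  have hcompact (n : ℕ) : IsCompact (f^[n] '' s) := hs.image_of_continuousOn (hf.iterate hmaps n)
  have hsub (n : ℕ) : f^[n] '' s ⊆ s := (hmaps.iterate n).image_subset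
  set fiber : ℕ → Set X := fun n => f^[n] '' s ∩ f ⁻¹' {z}
  have hfiber_ne (n : ℕ) : (fiber n).Nonempty := by
    obtain ⟨w, hw, hwz⟩ : z ∈ f '' (f^[n] '' s) := by
      simpa only [← image_comp, ← iterate_succ'] using mem_iInter.1 hz (n + 1)
    exact ⟨w, hw, hwz⟩
  have hfiber_closed (n : ℕ) : IsClosed (fiber n) :=
    (hf.mono (hsub n)).preimage_isClosed_of_isClosed (hcompact n).isClosed isClosed_singleton
  have hfiber_anti (n : ℕ) : fiber (n + 1) ⊆ fiber n := by
    refine inter_subset_inter_left _ ?_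
    rw [iterate_succ, image_comp]
    exact image_mono hmaps.image_subset
  obtain ⟨w, hw⟩ := IsCompact.nonempty_iInter_of_sequence_nonempty_isCompact_isClosed fiber
    hfiber_anti hfiber_ne ((hcompact 0).of_isClosed_subset (hfiber_closed 0) inter_subset_left)
    hfiber_closed
  exact ⟨w, mem_iInter.2 fun n => (mem_iInter.1 hw n).1, (mem_iInter.1 hw 0).2⟩

structure IsAttractingInterval {α : Type*} [Preorder α] [TopologicalSpace α]
    (f : α → α) (J : Set α) (c : α) : Prop where
  ordConnected : J.OrdConnected
  continuousOn : ContinuousOn f J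
  mapsTo : MapsTo f J J
  tendsto_iterate : ∀ x ∈ J, Tendsto (fun n => f^[n] x) atTop (𝓝 c)

namespace IsAttractingInterval

section Preorder

variable {α : Type*} [Preorder α] [TopologicalSpace α] {f : α → α} {J : Set α} {c : α}

theorem iterate (h : IsAttractingInterval f J c) {k : ℕ} (hk : k ≠ 0) :
    IsAttractingInterval f^[k] J c where
  ordConnected := h.ordConnected
  continuousOn := h.continuousOn.iterate h.mapsTo k
  mapsTo := h.mapsTo.iterate k
  tendsto_iterate x hx := by
    simp only [← iterate_mul]
    exact (h.tendsto_iterate x hx).comp <|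
      tendsto_atTop_mono (fun n => Nat.le_mul_of_pos_left n (Nat.pos_of_ne_zero hk)) tendsto_id

theorem dual (h : IsAttractingInterval f J c) :
    IsAttractingInterval (α := αᵒᵈ) f J c :=
  ⟨h.ordConnected.dual, h.continuousOn, h.mapsTo, h.tendsto_iterate⟩

theorem eq_of_isFixedPt [T2Space α] (h : IsAttractingInterval f J c) {z : α} (hz : z ∈ J)
    (hfz : IsFixedPt f z) : z = c :=
  hfz.eq_of_tendsto_iterate (h.tendsto_iterate z hz)

end Preorder

variable {α : Type*} [ConditionallyCompleteLinearOrder α] [TopologicalSpace α] [OrderTopology α]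
  [DenselyOrdered α] {f : α → α} {J : Set α} {c : α}

theorem apply_lt_self (h : IsAttractingInterval f J c) {y : α} (hy : y ∈ J) (hcy : c < y) :
    f y < y := by
  by_contra! hle
  -- A point `z ≥ y` with `f z < y` would give a fixed point in `[y, z]`,
  -- so `J ∩ Ici y` is invariant.
  have hinv : MapsTo f (J ∩ Ici y) (J ∩ Ici y) := by
    rintro z ⟨hz, hyz⟩
    refine ⟨h.mapsTo hz, show y ≤ f z from ?_⟩
    by_contra! hfz
    have hyzJ : Icc y z ⊆ J := h.ordConnected.out hy hz
    obtain ⟨t, ht, htf⟩ := isPreconnected_Icc.intermediate_value₂ (left_mem_Icc.2 hyz)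
      (right_mem_Icc.2 hyz) continuousOn_id (h.continuousOn.mono hyzJ) hle (hfz.le.trans hyz)
    exact (hcy.trans_le ht.1).ne' (h.eq_of_isFixedPt (hyzJ ht) htf.symm)
  have hyc : y ≤ c := ge_of_tendsto (h.tendsto_iterate y hy)
    (Eventually.of_forall fun n => (hinv.iterate n ⟨hy, le_rfl⟩).2)
  exact hyc.not_gt hcy

theorem lt_apply_self (h : IsAttractingInterval f J c) {y : α} (hy : y ∈ J) (hyc : y < c) :
    y < f y :=
  h.dual.apply_lt_self (α := αᵒᵈ) hy hyc

theorem lt_of_le_apply (h : IsAttractingInterval f J c) (hfix : f c = c) {y : α} (hy : y ∈ J)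
    (hyf : y ≤ f y) (hfy : f y ≠ c) : y < c := by
  refine lt_of_not_ge fun hcy => ?_
  rcases hcy.eq_or_lt with rfl | hcy
  · exact hfy hfix
  · exact (h.apply_lt_self hy hcy).not_ge hyf

theorem lt_of_apply_le (h : IsAttractingInterval f J c) (hfix : f c = c) {y : α} (hy : y ∈ J)
    (hfy : f y ≤ y) (hfyc : f y ≠ c) : c < y :=
  h.dual.lt_of_le_apply (α := αᵒᵈ) hfix hy hfy hfyc

theorem exists_Icc_subset_mapsTo_of_le (h : IsAttractingInterval f J c) (hc : c ∈ J)
    (hfix : f c = c) {q : α} (hq : q ∈ J) (hcq : c ≤ q) :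
    ∃ p ≤ c, Icc p q ⊆ J ∧ MapsTo f (Icc p q) (Icc p q) := by
  have hcqJ : Icc c q ⊆ J := h.ordConnected.out hc hq
  obtain ⟨t, ht, htmin⟩ :=
    isCompact_Icc.exists_isMinOn (nonempty_Icc.2 hcq) (h.continuousOn.mono hcqJ)
  have hpqJ : Icc (f t) q ⊆ J := h.ordConnected.out (h.mapsTo (hcqJ ht)) hq
  refine ⟨f t, (htmin (left_mem_Icc.2 hcq)).trans_eq hfix, hpqJ, ?_⟩
  rintro y hy
  rcases lt_or_ge y c with hyc | hcy
  · -- `y = f s` with `c < s ≤ t`, so `f y = f (f s) < s ≤ q`.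
    have hctJ : Icc c t ⊆ J := (Icc_subset_Icc_right ht.2).trans hcqJ
    obtain ⟨s, hs, rfl⟩ :=
      intermediate_value_Icc' ht.1 (h.continuousOn.mono hctJ) ⟨hy.1, hyc.le.trans_eq hfix.symm⟩
    have hcs : c < s := lt_of_le_of_ne hs.1 (by rintro rfl; exact hyc.ne hfix)
    exact ⟨hy.1.trans (h.lt_apply_self (hpqJ hy) hyc).le,
      ((h.iterate two_ne_zero).apply_lt_self (hctJ hs) hcs).le.trans (hs.2.trans ht.2)⟩
  · refine ⟨htmin ⟨hcy, hy.2⟩, ?_⟩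
    rcases hcy.eq_or_lt with rfl | hcy
    · exact hfix.trans_le hcq
    · exact (h.apply_lt_self (hpqJ hy) hcy).le.trans hy.2

theorem exists_Icc_subset_mapsTo_of_ge (h : IsAttractingInterval f J c) (hc : c ∈ J)
    (hfix : f c = c) {p : α} (hp : p ∈ J) (hpc : p ≤ c) :
    ∃ q ≥ c, Icc p q ⊆ J ∧ MapsTo f (Icc p q) (Icc p q) := by
  obtain ⟨q, hcq, hJ, hmaps⟩ := h.dual.exists_Icc_subset_mapsTo_of_le (α := αᵒᵈ) hc hfix hp hpc
  refine ⟨OrderDual.ofDual q, hcq, fun y hy => hJ ⟨hy.2, hy.1⟩, fun y hy => ?_⟩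
  obtain ⟨hqy, hyp⟩ := hmaps ⟨hy.2, hy.1⟩
  exact ⟨hyp, hqy⟩

theorem exists_Icc_subset_mapsTo (h : IsAttractingInterval f J c) (hc : c ∈ J)
    (hfix : f c = c) {x : α} (hx : x ∈ J) :
    ∃ a b, x ∈ Icc a b ∧ c ∈ Icc a b ∧ Icc a b ⊆ J ∧ MapsTo f (Icc a b) (Icc a b) := by
  rcases le_total c x with hcx | hxc
  · obtain ⟨p, hpc, hJ, hmaps⟩ := h.exists_Icc_subset_mapsTo_of_le hc hfix hx hcx
    exact ⟨p, x, ⟨hpc.trans hcx, le_rfl⟩, ⟨hpc, hcx⟩, hJ, hmaps⟩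
  · obtain ⟨q, hcq, hJ, hmaps⟩ := h.exists_Icc_subset_mapsTo_of_ge hc hfix hx hxc
    exact ⟨x, q, ⟨le_rfl, hxc.trans hcq⟩, ⟨hxc, hcq⟩, hJ, hmaps⟩

theorem eq_singleton_of_subset_image (h : IsAttractingInterval f J c) (hfix : f c = c)
    {K : Set α} (hK : IsCompact K) (hcK : c ∈ K) (hKJ : K ⊆ J) (hKf : K ⊆ f '' K) :
    K = {c} := by
  have hKne : K.Nonempty := ⟨c, hcK⟩
  have hpre_sSup (hcM : c < sSup K) : ∃ w ∈ K, w < c ∧ f w = sSup K := by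
    obtain ⟨w, hwK, hwM⟩ := hKf (hK.sSup_mem hKne)
    exact ⟨w, hwK, h.lt_of_le_apply hfix (hKJ hwK)
      (hwM ▸ le_csSup hK.bddAbove hwK) (hwM ▸ hcM.ne'), hwM⟩
  have hpre_sInf (hmc : sInf K < c) : ∃ v ∈ K, c < v ∧ f v = sInf K := by
    obtain ⟨v, hvK, hvm⟩ := hKf (hK.sInf_mem hKne)
    exact ⟨v, hvK, h.lt_of_apply_le hfix (hKJ hvK)
      (hvm ▸ csInf_le hK.bddBelow hvK) (hvm ▸ hmc.ne), hvm⟩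
  have hnot_both : ¬(sInf K < c ∧ c < sSup K) := by
    rintro ⟨hmc, hcM⟩
    obtain ⟨w, hwK, hwc, hwM⟩ := hpre_sSup hcM
    obtain ⟨v, hvK, hcv, hvm⟩ := hpre_sInf hmc
    -- `v = f u` for some `u ∈ [w, c)`, and then `f (f u) = sInf K ≤ u` against `u < f (f u)`.
    have hwcJ : Icc w c ⊆ J := h.ordConnected.out (hKJ hwK) (hKJ hcK)
    obtain ⟨u, hu, huv⟩ := intermediate_value_Icc' hwc.le (h.continuousOn.mono hwcJ)
      ⟨hfix.trans_le hcv.le, hwM ▸ le_csSup hK.bddAbove hvK⟩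
    have huc : u < c := lt_of_le_of_ne hu.2 (by rintro rfl; exact hcv.ne (hfix ▸ huv))
    have hffu : f (f u) ≤ u := by
      rw [huv, hvm]
      exact (csInf_le hK.bddBelow hwK).trans hu.1
    exact ((h.iterate two_ne_zero).lt_apply_self (hwcJ hu) huc).not_ge hffu
  have hsSup : sSup K ≤ c := by
    by_contra! hcM
    obtain ⟨w, hwK, hwc, -⟩ := hpre_sSup hcM
    exact hnot_both ⟨(csInf_le hK.bddBelow hwK).trans_lt hwc, hcM⟩
  have hsInf : c ≤ sInf K := by
    by_contra! hmc
    obtain ⟨v, hvK, hcv, -⟩ := hpre_sInf hmc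
    exact hnot_both ⟨hmc, hcv.trans_le (le_csSup hK.bddAbove hvK)⟩
  exact eq_singleton_iff_unique_mem.2 ⟨hcK, fun z hz =>
    le_antisymm ((le_csSup hK.bddAbove hz).trans hsSup) (hsInf.trans (csInf_le hK.bddBelow hz))⟩

end IsAttractingInterval

theorem squeezing_interval_exists_general
    (F : ℝ → ℝ) (L J : Set ℝ)
    (hFc : ContinuousOn F L)
    (xs : ℝ) (hfix : F xs = xs)
    (hJsub : J ⊆ L) (hJconn : J.OrdConnected)
    (hxsJ : xs ∈ J) (hJmaps : Set.MapsTo F J J)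
    (hattr : ∀ x ∈ J, Filter.Tendsto (fun n => F^[n] x) Filter.atTop (nhds xs)) :
    ∀ x ∈ J, ∃ a b : ℝ, a ≤ b ∧ x ∈ Set.Icc a b ∧ Set.Icc a b ⊆ J ∧
      Set.MapsTo F (Set.Icc a b) (Set.Icc a b) ∧
      (⋂ n : ℕ, F^[n] '' Set.Icc a b) = {xs} := by
  intro x hx
  have h : IsAttractingInterval F J xs := ⟨hJconn, hFc.mono hJsub, hJmaps, hattr⟩
  obtain ⟨a, b, hxab, hxsab, habJ, habF⟩ := h.exists_Icc_subset_mapsTo hxsJ hfix hx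
  refine ⟨a, b, hxab.1.trans hxab.2, hxab, habJ, habF, ?_⟩
  have hcont : ContinuousOn F (Icc a b) := h.continuousOn.mono habJ
  have hsub : ⋂ n : ℕ, F^[n] '' Icc a b ⊆ Icc a b := iInter_subset_of_subset 0 (by simp)
  refine h.eq_singleton_of_subset_image hfix ?_ ?_ (hsub.trans habJ)
    (iInter_image_iterate_subset_image isCompact_Icc hcont habF)
  · exact isCompact_Icc.of_isClosed_subset (isClosed_iInter fun n =>
      (isCompact_Icc.image_of_continuousOn (hcont.iterate habF n)).isClosed) hsub
  · exact mem_iInter.2 fun n => ⟨xs, hxsab, iterate_fixed hfix n⟩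

/-- For a continuous self-map F of a closed interval L with fixed point x*, and an
open-in-L interval J in the domain of immediate attraction of x*, every point x ∈ J lies
in a closed bounded invariant interval L₀ ⊆ J whose iterated images squeeze onto {x*}. -/
theorem squeezing_interval_exists
    (F : ℝ → ℝ) (L J : Set ℝ)
    (hLclosed : IsClosed L) (hLconn : L.OrdConnected)
    (hFc : ContinuousOn F L) (hFmaps : Set.MapsTo F L L)
    (xs : ℝ) (hxsL : xs ∈ L) (hfix : F xs = xs)
    (hJsub : J ⊆ L) (hJconn : J.OrdConnected)
    (hJopen : ∃ U : Set ℝ, IsOpen U ∧ J = U ∩ L)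
    (hxsJ : xs ∈ J) (hJmaps : Set.MapsTo F J J)
    (hattr : ∀ x ∈ J, Filter.Tendsto (fun n => F^[n] x) Filter.atTop (nhds xs)) :
    ∀ x ∈ J, ∃ a b : ℝ, a ≤ b ∧ x ∈ Set.Icc a b ∧ Set.Icc a b ⊆ J ∧
      Set.MapsTo F (Set.Icc a b) (Set.Icc a b) ∧
      (⋂ n : ℕ, F^[n] '' Set.Icc a b) = {xs} :=
  squeezing_interval_exists_general F L J hFc xs hfix hJsub hJconn hxsJ hJmaps hattr
end

section
/- Under hypotheses (H1)–(H5), suppose the limiting set L* = [α*, β*] of the interval map Φ satisfies α* < β*, so that {α*, β*} is a cycle of period two of Φ. Then {α*, β*} is the maximal cycle of period two, i.e. every period-two point of Φ lies in [α*, β*]; moreover for every G₀ ∈ [0, α*) the sequence (Φ^{2n}(G₀))_{n≥0} is increasing and converges to α*, and for every G₀ > β* the sequence (Φ^{2n}(G₀))_{n≥0} is decreasing and converges to β*. -/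
open Filter Set

/-- Auxiliary mutually-recursive endpoint sequence for the nested intervals. -/
private def cdSeq (Φ : ℝ → ℝ) (c0 d0 : ℝ) : ℕ → ℝ × ℝ
  | 0 => (c0, d0)
  | n+1 => (Φ (cdSeq Φ c0 d0 n).2, Φ (cdSeq Φ c0 d0 n).1)

/-- If the limiting set L* = [α*, β*] of Φ has nonempty interior then {α*, β*} is the
maximal period-two cycle, and even iterates of points outside [α*, β*] converge
monotonically to the cycle. -/
theorem maximal_two_cycle
    (τ0 Gin q τ a0 a bbar d e hh : ℝ)
    (f1 f2 f4 f5 f1' f2' f4' f5' : ℝ → ℝ)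
    (hτ0 : 0 < τ0) (hGin : 0 < Gin) (hq : 0 < q) (hτ : 0 < τ)
    (hf1nn : ∀ u ≥ (0:ℝ), 0 ≤ f1 u) (hf2nn : ∀ u ≥ (0:ℝ), 0 ≤ f2 u)
    (hf4nn : ∀ u ≥ (0:ℝ), 0 ≤ f4 u) (hf5nn : ∀ u ≥ (0:ℝ), 0 ≤ f5 u)
    (hf1d : ∀ u ≥ (0:ℝ), HasDerivAt f1 (f1' u) u) (hf1c : ContinuousOn f1' (Set.Ici 0))
    (hf2d : ∀ u ≥ (0:ℝ), HasDerivAt f2 (f2' u) u) (hf2c : ContinuousOn f2' (Set.Ici 0))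
    (hf4d : ∀ u ≥ (0:ℝ), HasDerivAt f4 (f4' u) u) (hf4c : ContinuousOn f4' (Set.Ici 0))
    (hf5d : ∀ u ≥ (0:ℝ), HasDerivAt f5 (f5' u) u) (hf5c : ContinuousOn f5' (Set.Ici 0))
    (hf1pos : ∀ u > (0:ℝ), 0 < f1 u) (hf1inc : ∀ u > (0:ℝ), 0 < f1' u)
    (hf10 : f1 0 = a0) (ha0 : 0 < a0) (ha : 0 < a)
    (hf1lim : Filter.Tendsto f1 Filter.atTop (nhds a))
    (hf2pos : ∀ u > (0:ℝ), 0 < f2 u) (hf2inc : ∀ u > (0:ℝ), 0 < f2' u)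
    (hf20 : f2 0 = 0) (hbbar : 0 < bbar)
    (hf2lim : Filter.Tendsto f2 Filter.atTop (nhds bbar))
    (hf4pos : ∀ u > (0:ℝ), 0 < f4 u) (hf4inc : ∀ u > (0:ℝ), 0 < f4' u)
    (hf40 : f4 0 = d) (hd : 0 < d) (he : 0 < e)
    (hf4lim : Filter.Tendsto f4 Filter.atTop (nhds e))
    (hf5pos : ∀ u > (0:ℝ), 0 < f5 u) (hf5dec : ∀ u > (0:ℝ), f5' u < 0)
    (hf50 : f5 0 = hh) (hhh : 0 < hh)
    (hf5lim : Filter.Tendsto f5 Filter.atTop (nhds 0))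
    (Gs : ℝ) (hGspos : 0 < Gs)
    (hGseq : f2 Gs + q * Gs * f4 (τ0 * f1 Gs) = Gin + f5 (τ0 * f1 Gs))
    (Φ : ℝ → ℝ)
    (hΦ : ∀ u ≥ (0:ℝ), 0 ≤ Φ u ∧
      f2 (Φ u) + q * Φ u * f4 (τ0 * f1 (Φ u)) = Gin + f5 (τ0 * f1 u))
    (Φz Φinf : ℝ)
    (hΦz : 0 ≤ Φz ∧ f2 Φz + q * Φz * f4 (τ0 * f1 Φz) = Gin + f5 (τ0 * a0))
    (hΦinf : 0 ≤ Φinf ∧ f2 Φinf + q * Φinf * f4 (τ0 * f1 Φinf) = Gin + f5 (τ0 * a))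
    (L : ℕ → Set ℝ) (hL0 : L 0 = Set.Icc Φinf Φz) (hLsucc : ∀ n, L (n + 1) = Φ '' L n)
    (αs βs : ℝ) (hLstar : (⋂ n : ℕ, L n) = Set.Icc αs βs) (hαβ : αs < βs) :
    (∀ x y : ℝ, 0 ≤ x → 0 ≤ y → x ≠ y → Φ x = y → Φ y = x →
      x ∈ Set.Icc αs βs ∧ y ∈ Set.Icc αs βs) ∧
    (∀ G0 : ℝ, 0 ≤ G0 → G0 < αs →
      StrictMono (fun n => Φ^[2 * n] G0) ∧
      Filter.Tendsto (fun n => Φ^[2 * n] G0) Filter.atTop (nhds αs)) ∧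
    (∀ G0 : ℝ, βs < G0 →
      StrictAnti (fun n => Φ^[2 * n] G0) ∧
      Filter.Tendsto (fun n => Φ^[2 * n] G0) Filter.atTop (nhds βs)) := by
  obtain ⟨hΦz0, hΦzeq⟩ := hΦz
  obtain ⟨hΦinf0, hΦinfeq⟩ := hΦinf
  -- continuity of the data functions on [0,∞)
  have hf1ct : ∀ u : ℝ, 0 ≤ u → ContinuousAt f1 u := fun u hu => (hf1d u hu).continuousAt
  have hf2ct : ∀ u : ℝ, 0 ≤ u → ContinuousAt f2 u := fun u hu => (hf2d u hu).continuousAt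
  have hf4ct : ∀ u : ℝ, 0 ≤ u → ContinuousAt f4 u := fun u hu => (hf4d u hu).continuousAt
  have hf5ct : ∀ u : ℝ, 0 ≤ u → ContinuousAt f5 u := fun u hu => (hf5d u hu).continuousAt
  -- strict monotonicity of f1, f2, f4; strict antitonicity of f5, on [0,∞)
  have hf1m : StrictMonoOn f1 (Set.Ici 0) := by
    apply strictMonoOn_of_deriv_pos (convex_Ici 0)
      (fun u hu => (hf1ct u hu).continuousWithinAt)
    intro u hu
    rw [interior_Ici] at hu
    rw [(hf1d u hu.le).deriv]
    exact hf1inc u hu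
  have hf2m : StrictMonoOn f2 (Set.Ici 0) := by
    apply strictMonoOn_of_deriv_pos (convex_Ici 0)
      (fun u hu => (hf2ct u hu).continuousWithinAt)
    intro u hu
    rw [interior_Ici] at hu
    rw [(hf2d u hu.le).deriv]
    exact hf2inc u hu
  have hf4m : StrictMonoOn f4 (Set.Ici 0) := by
    apply strictMonoOn_of_deriv_pos (convex_Ici 0)
      (fun u hu => (hf4ct u hu).continuousWithinAt)
    intro u hu
    rw [interior_Ici] at hu
    rw [(hf4d u hu.le).deriv]
    exact hf4inc u hu
  have hf5m : StrictAntiOn f5 (Set.Ici 0) := by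
    apply strictAntiOn_of_deriv_neg (convex_Ici 0)
      (fun u hu => (hf5ct u hu).continuousWithinAt)
    intro u hu
    rw [interior_Ici] at hu
    rw [(hf5d u hu.le).deriv]
    exact hf5dec u hu
  -- bounds for f1
  have hf1ge : ∀ u : ℝ, 0 ≤ u → a0 ≤ f1 u := by
    intro u hu
    rw [← hf10]
    exact hf1m.monotoneOn Set.self_mem_Ici (Set.mem_Ici.mpr hu) hu
  have hf1le : ∀ u : ℝ, 0 ≤ u → f1 u ≤ a := by
    intro u hu
    refine ge_of_tendsto hf1lim ?_
    filter_upwards [Filter.eventually_ge_atTop u] with w hw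
    exact hf1m.monotoneOn (Set.mem_Ici.mpr hu) (Set.mem_Ici.mpr (hu.trans hw)) hw
  have hf1lt : ∀ u : ℝ, 0 ≤ u → f1 u < a := fun u hu =>
    lt_of_lt_of_le
      (hf1m (Set.mem_Ici.mpr hu) (Set.mem_Ici.mpr (by linarith)) (lt_add_one u))
      (hf1le (u + 1) (by linarith))
  have hf1pos' : ∀ u : ℝ, 0 ≤ u → 0 < f1 u := fun u hu => lt_of_lt_of_le ha0 (hf1ge u hu)
  have harg : ∀ u : ℝ, 0 ≤ u → 0 < τ0 * f1 u := fun u hu => mul_pos hτ0 (hf1pos' u hu)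
  -- the function F is strictly increasing on [0,∞)
  have hFm : ∀ x y : ℝ, 0 ≤ x → x < y →
      f2 x + q * x * f4 (τ0 * f1 x) < f2 y + q * y * f4 (τ0 * f1 y) := by
    intro x y hx hxy
    have hy : 0 ≤ y := hx.trans hxy.le
    have h2 : f2 x < f2 y := hf2m (Set.mem_Ici.mpr hx) (Set.mem_Ici.mpr hy) hxy
    have h1 : f1 x ≤ f1 y :=
      hf1m.monotoneOn (Set.mem_Ici.mpr hx) (Set.mem_Ici.mpr hy) hxy.le
    have h4le : f4 (τ0 * f1 x) ≤ f4 (τ0 * f1 y) :=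
      hf4m.monotoneOn (Set.mem_Ici.mpr (harg x hx).le) (Set.mem_Ici.mpr (harg y hy).le)
        (mul_le_mul_of_nonneg_left h1 hτ0.le)
    have h4pos : 0 < f4 (τ0 * f1 x) := hf4pos _ (harg x hx)
    nlinarith [mul_le_mul hxy.le h4le h4pos.le hy]
  have hFle : ∀ x y : ℝ, 0 ≤ x → 0 ≤ y →
      f2 x + q * x * f4 (τ0 * f1 x) ≤ f2 y + q * y * f4 (τ0 * f1 y) → x ≤ y := by
    intro x y hx hy h
    by_contra hc
    push_neg at hc
    exact absurd h (not_le.mpr (hFm y x hy hc))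
  have hFlt : ∀ x y : ℝ, 0 ≤ x → 0 ≤ y →
      f2 x + q * x * f4 (τ0 * f1 x) < f2 y + q * y * f4 (τ0 * f1 y) → x < y := by
    intro x y hx hy h
    by_contra hc
    push_neg at hc
    rcases eq_or_lt_of_le hc with rfl | hlt
    · exact lt_irrefl _ h
    · exact absurd (hFm y x hy hlt) (not_lt.mpr h.le)
  have hFinj : ∀ x y : ℝ, 0 ≤ x → 0 ≤ y →
      f2 x + q * x * f4 (τ0 * f1 x) = f2 y + q * y * f4 (τ0 * f1 y) → x = y :=
    fun x y hx hy h => le_antisymm (hFle x y hx hy h.le) (hFle y x hy hx h.ge)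
  -- bounds for Φ
  have hΦmem : ∀ u : ℝ, 0 ≤ u → Φinf < Φ u ∧ Φ u ≤ Φz := by
    intro u hu
    obtain ⟨h0, heq⟩ := hΦ u hu
    constructor
    · apply hFlt Φinf (Φ u) hΦinf0 h0
      rw [hΦinfeq, heq]
      have h5 : f5 (τ0 * a) < f5 (τ0 * f1 u) :=
        hf5m (Set.mem_Ici.mpr (harg u hu).le) (Set.mem_Ici.mpr (mul_pos hτ0 ha).le)
          (mul_lt_mul_of_pos_left (hf1lt u hu) hτ0)
      linarith
    · apply hFle (Φ u) Φz h0 hΦz0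
      rw [hΦzeq, heq]
      have h5 : f5 (τ0 * f1 u) ≤ f5 (τ0 * a0) := by
        rcases eq_or_lt_of_le (hf1ge u hu) with h | h
        · rw [← h]
        · exact (hf5m (Set.mem_Ici.mpr (mul_pos hτ0 ha0).le)
            (Set.mem_Ici.mpr (harg u hu).le) (mul_lt_mul_of_pos_left h hτ0)).le
      linarith
  -- Φ is strictly antitone on [0,∞)
  have hΦanti : ∀ x y : ℝ, 0 ≤ x → x < y → Φ y < Φ x := by
    intro x y hx hxy
    have hy : 0 ≤ y := hx.trans hxy.le
    obtain ⟨hx0, hxeq⟩ := hΦ x hx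
    obtain ⟨hy0, hyeq⟩ := hΦ y hy
    apply hFlt (Φ y) (Φ x) hy0 hx0
    rw [hxeq, hyeq]
    have h1 : f1 x < f1 y := hf1m (Set.mem_Ici.mpr hx) (Set.mem_Ici.mpr hy) hxy
    have h5 : f5 (τ0 * f1 y) < f5 (τ0 * f1 x) :=
      hf5m (Set.mem_Ici.mpr (harg x hx).le) (Set.mem_Ici.mpr (harg y hy).le)
        (mul_lt_mul_of_pos_left h1 hτ0)
    linarith
  have hΦantile : ∀ x y : ℝ, 0 ≤ x → x ≤ y → Φ y ≤ Φ x := by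
    intro x y hx hxy
    rcases eq_or_lt_of_le hxy with rfl | h
    · exact le_rfl
    · exact (hΦanti x y hx h).le
  have hΦ2mono : ∀ x y : ℝ, 0 ≤ x → 0 ≤ y → x < y → Φ (Φ x) < Φ (Φ y) :=
    fun x y hx hy hxy => hΦanti (Φ y) (Φ x) (hΦ y hy).1 (hΦanti x y hx hxy)
  -- limit identification lemma
  have hconv : ∀ (x : ℕ → ℝ) (xs p : ℝ), (∀ n, 0 ≤ x n) →
      Filter.Tendsto x Filter.atTop (nhds xs) → 0 ≤ xs →
      Filter.Tendsto (fun n => Φ (x n)) Filter.atTop (nhds p) → 0 ≤ p → Φ xs = p := by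
    intro x xs p hxnn hx hxs hΦx hp
    have cF : ContinuousAt (fun z : ℝ => f2 z + q * z * f4 (τ0 * f1 z)) p := by
      have c2 : ContinuousAt f2 p := hf2ct p hp
      have c1 : ContinuousAt f1 p := hf1ct p hp
      have c4 : ContinuousAt f4 (τ0 * f1 p) := hf4ct _ (harg p hp).le
      exact c2.add ((continuousAt_const.mul continuousAt_id).mul
        (ContinuousAt.comp c4 (continuousAt_const.mul c1)))
    have h1 : Filter.Tendsto (fun n => f2 (Φ (x n)) + q * Φ (x n) * f4 (τ0 * f1 (Φ (x n))))
        Filter.atTop (nhds (f2 p + q * p * f4 (τ0 * f1 p))) := cF.tendsto.comp hΦx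
    have h2 : ∀ n, f2 (Φ (x n)) + q * Φ (x n) * f4 (τ0 * f1 (Φ (x n))) =
        Gin + f5 (τ0 * f1 (x n)) := fun n => (hΦ (x n) (hxnn n)).2
    have h1' := h1.congr h2
    have cH : ContinuousAt (fun u : ℝ => Gin + f5 (τ0 * f1 u)) xs := by
      have c1 : ContinuousAt f1 xs := hf1ct xs hxs
      have c5 : ContinuousAt f5 (τ0 * f1 xs) := hf5ct _ (harg xs hxs).le
      exact continuousAt_const.add (ContinuousAt.comp c5 (continuousAt_const.mul c1))
    have h3 : Filter.Tendsto (fun n => Gin + f5 (τ0 * f1 (x n))) Filter.atTop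
        (nhds (Gin + f5 (τ0 * f1 xs))) := cH.tendsto.comp hx
    have h4 := tendsto_nhds_unique h1' h3
    have h5 := (hΦ xs hxs).2
    exact hFinj (Φ xs) p (hΦ xs hxs).1 hp (by rw [h5]; exact h4.symm)
  -- αs, βs belong to every L n
  have hmemL : ∀ n, αs ∈ L n ∧ βs ∈ L n := by
    intro n
    constructor
    · have h : αs ∈ ⋂ m, L m := by rw [hLstar]; exact Set.mem_Icc.mpr ⟨le_rfl, hαβ.le⟩
      exact Set.mem_iInter.mp h n
    · have h : βs ∈ ⋂ m, L m := by rw [hLstar]; exact Set.mem_Icc.mpr ⟨hαβ.le, le_rfl⟩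
      exact Set.mem_iInter.mp h n
  have hΦinfαs : Φinf ≤ αs := by
    have h := (hmemL 0).1; rw [hL0] at h; exact h.1
  have hβsΦz : βs ≤ Φz := by
    have h := (hmemL 0).2; rw [hL0] at h; exact h.2
  have hαs0 : 0 ≤ αs := hΦinf0.trans hΦinfαs
  have hβs0 : 0 ≤ βs := hαs0.trans hαβ.le
  have hαsΦz : αs ≤ Φz := hαβ.le.trans hβsΦz
  -- any 2-periodic point in [Φinf, Φz] lies in [αs, βs]
  have hcycle : ∀ x : ℝ, Φinf ≤ x → x ≤ Φz → Φ (Φ x) = x → αs ≤ x ∧ x ≤ βs := by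
    intro x h1 h2 hfix
    have hx0 : 0 ≤ x := hΦinf0.trans h1
    have hy := hΦmem x hx0
    have hboth : ∀ n, x ∈ L n ∧ Φ x ∈ L n := by
      intro n
      induction n with
      | zero =>
        constructor
        · rw [hL0]; exact Set.mem_Icc.mpr ⟨h1, h2⟩
        · rw [hL0]; exact Set.mem_Icc.mpr ⟨hy.1.le, hy.2⟩
      | succ n ih =>
        constructor
        · rw [hLsucc]; exact ⟨Φ x, ih.2, hfix⟩
        · rw [hLsucc]; exact ⟨x, ih.1, rfl⟩
    have hmem : x ∈ ⋂ n, L n := Set.mem_iInter.mpr (fun n => (hboth n).1)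
    rw [hLstar] at hmem
    exact ⟨hmem.1, hmem.2⟩
  -- the endpoint sequences
  have hceq : ∀ n, (cdSeq Φ Φinf Φz (n + 1)).1 = Φ (cdSeq Φ Φinf Φz n).2 := fun n => rfl
  have hdeq : ∀ n, (cdSeq Φ Φinf Φz (n + 1)).2 = Φ (cdSeq Φ Φinf Φz n).1 := fun n => rfl
  have hc0' : (cdSeq Φ Φinf Φz 0).1 = Φinf := rfl
  have hd0' : (cdSeq Φ Φinf Φz 0).2 = Φz := rfl
  have hΦinfΦz : Φinf ≤ Φz := hΦinfαs.trans hαsΦz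
  have hinv : ∀ n, 0 ≤ (cdSeq Φ Φinf Φz n).1 ∧
      (cdSeq Φ Φinf Φz n).1 ≤ (cdSeq Φ Φinf Φz n).2 ∧
      (cdSeq Φ Φinf Φz n).2 ≤ Φz ∧
      ∀ x ∈ L n, (cdSeq Φ Φinf Φz n).1 ≤ x ∧ x ≤ (cdSeq Φ Φinf Φz n).2 := by
    intro n
    induction n with
    | zero =>
      refine ⟨hΦinf0, hΦinfΦz, le_rfl, ?_⟩
      intro x hx
      rw [hL0] at hx
      exact ⟨hx.1, hx.2⟩
    | succ n ih =>
      obtain ⟨h1, h2, h3, h4⟩ := ih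
      have hd0 : 0 ≤ (cdSeq Φ Φinf Φz n).2 := h1.trans h2
      rw [hceq, hdeq]
      refine ⟨(hΦ _ hd0).1, hΦantile _ _ h1 h2, (hΦmem _ h1).2, ?_⟩
      intro x hx
      rw [hLsucc] at hx
      obtain ⟨w, hw, rfl⟩ := hx
      obtain ⟨hw1, hw2⟩ := h4 w hw
      have hw0 : 0 ≤ w := h1.trans hw1
      exact ⟨hΦantile w _ hw0 hw2, hΦantile _ w h1 hw1⟩
  have hdnn : ∀ n, 0 ≤ (cdSeq Φ Φinf Φz n).2 := fun n => (hinv n).1.trans (hinv n).2.1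
  have hmonocd : ∀ n, (cdSeq Φ Φinf Φz n).1 ≤ (cdSeq Φ Φinf Φz (n + 1)).1 ∧
      (cdSeq Φ Φinf Φz (n + 1)).2 ≤ (cdSeq Φ Φinf Φz n).2 := by
    intro n
    induction n with
    | zero =>
      rw [hceq, hdeq, hc0', hd0']
      exact ⟨(hΦmem Φz hΦz0).1.le, (hΦmem Φinf hΦinf0).2⟩
    | succ n ih =>
      rw [hceq n, hceq (n + 1), hdeq n, hdeq (n + 1)]
      exact ⟨hΦantile _ _ (hdnn (n + 1)) ih.2, hΦantile _ _ (hinv n).1 ih.1⟩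
  have hcmon : Monotone (fun n => (cdSeq Φ Φinf Φz n).1) :=
    monotone_nat_of_le_succ (fun n => (hmonocd n).1)
  have hdmon : Antitone (fun n => (cdSeq Φ Φinf Φz n).2) :=
    antitone_nat_of_succ_le (fun n => (hmonocd n).2)
  have hcub : ∀ n, (cdSeq Φ Φinf Φz n).1 ≤ αs := fun n => ((hinv n).2.2.2 αs (hmemL n).1).1
  have hdlb : ∀ n, βs ≤ (cdSeq Φ Φinf Φz n).2 := fun n => ((hinv n).2.2.2 βs (hmemL n).2).2
  have hcbdd : BddAbove (Set.range fun n => (cdSeq Φ Φinf Φz n).1) :=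
    ⟨αs, by rintro _ ⟨n, rfl⟩; exact hcub n⟩
  have hdbdd : BddBelow (Set.range fun n => (cdSeq Φ Φinf Φz n).2) :=
    ⟨βs, by rintro _ ⟨n, rfl⟩; exact hdlb n⟩
  have htc : Filter.Tendsto (fun n => (cdSeq Φ Φinf Φz n).1) Filter.atTop
      (nhds (⨆ n, (cdSeq Φ Φinf Φz n).1)) := tendsto_atTop_ciSup hcmon hcbdd
  have htd : Filter.Tendsto (fun n => (cdSeq Φ Φinf Φz n).2) Filter.atTop
      (nhds (⨅ n, (cdSeq Φ Φinf Φz n).2)) := tendsto_atTop_ciInf hdmon hdbdd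
  have hα'le : (⨆ n, (cdSeq Φ Φinf Φz n).1) ≤ αs := ciSup_le hcub
  have hβ'ge : βs ≤ ⨅ n, (cdSeq Φ Φinf Φz n).2 := le_ciInf hdlb
  have hα'0 : 0 ≤ ⨆ n, (cdSeq Φ Φinf Φz n).1 := le_trans (hinv 0).1 (le_ciSup hcbdd 0)
  have hβ'0 : 0 ≤ ⨅ n, (cdSeq Φ Φinf Φz n).2 := hβs0.trans hβ'ge
  have hΦβ' : Φ (⨅ n, (cdSeq Φ Φinf Φz n).2) = ⨆ n, (cdSeq Φ Φinf Φz n).1 := by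
    apply hconv _ _ _ hdnn htd hβ'0 ?_ hα'0
    have t := htc.comp (Filter.tendsto_add_atTop_nat 1)
    exact t.congr (fun n => hceq n)
  have hΦα' : Φ (⨆ n, (cdSeq Φ Φinf Φz n).1) = ⨅ n, (cdSeq Φ Φinf Φz n).2 := by
    apply hconv _ _ _ (fun n => (hinv n).1) htc hα'0 ?_ hβ'0
    have t := htd.comp (Filter.tendsto_add_atTop_nat 1)
    exact t.congr (fun n => hdeq n)
  have hα'cyc := hcycle (⨆ n, (cdSeq Φ Φinf Φz n).1)
    (by rw [← hc0']; exact le_ciSup hcbdd 0) (hα'le.trans hαsΦz)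
    (by rw [hΦα', hΦβ'])
  have hβ'cyc := hcycle (⨅ n, (cdSeq Φ Φinf Φz n).2)
    (hΦinfαs.trans (hαβ.le.trans hβ'ge)) (by rw [← hd0']; exact ciInf_le hdbdd 0)
    (by rw [hΦβ', hΦα'])
  have hα'eq : (⨆ n, (cdSeq Φ Φinf Φz n).1) = αs := le_antisymm hα'le hα'cyc.1
  have hβ'eq : (⨅ n, (cdSeq Φ Φinf Φz n).2) = βs := le_antisymm hβ'cyc.2 hβ'ge
  have hΦαs : Φ αs = βs := by rw [← hα'eq, hΦα', hβ'eq]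
  have hΦβs : Φ βs = αs := by rw [← hβ'eq, hΦβ', hα'eq]
  have hfixα : Φ (Φ αs) = αs := by rw [hΦαs, hΦβs]
  have hfixβ : Φ (Φ βs) = βs := by rw [hΦβs, hΦαs]
  -- orbit machinery
  have hiter_nn : ∀ x : ℝ, 0 ≤ x → ∀ k, 0 ≤ Φ^[k] x := by
    intro x hx k
    induction k with
    | zero => exact hx
    | succ k ih => rw [Function.iterate_succ_apply']; exact (hΦ _ ih).1
  have hrec : ∀ (x : ℝ) (n : ℕ), Φ^[2 * (n + 1)] x = Φ (Φ (Φ^[2 * n] x)) := by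
    intro x n
    have h : 2 * (n + 1) = (2 * n + 1) + 1 := by ring
    rw [h, Function.iterate_succ_apply', Function.iterate_succ_apply']
  have hlim2 : ∀ (g : ℕ → ℝ) (p : ℝ), (∀ n, 0 ≤ g n) → (∀ n, g (n + 1) = Φ (Φ (g n))) →
      Filter.Tendsto g Filter.atTop (nhds p) → 0 ≤ p →
      (Monotone g ∨ Antitone g) → Φ (Φ p) = p := by
    intro g p hnn hgr hg hp hmon
    obtain ⟨r, hr0, hrt⟩ : ∃ r, 0 ≤ r ∧
        Filter.Tendsto (fun n => Φ (g n)) Filter.atTop (nhds r) := by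
      rcases hmon with hm | hm
      · have ha' : Antitone fun n => Φ (g n) := fun i j hij => hΦantile _ _ (hnn i) (hm hij)
        have hb : BddBelow (Set.range fun n => Φ (g n)) :=
          ⟨0, by rintro _ ⟨n, rfl⟩; exact (hΦ _ (hnn n)).1⟩
        exact ⟨_, le_ciInf (fun n => (hΦ _ (hnn n)).1), tendsto_atTop_ciInf ha' hb⟩
      · have hm' : Monotone fun n => Φ (g n) := fun i j hij => hΦantile _ _ (hnn j) (hm hij)
        have hb : BddAbove (Set.range fun n => Φ (g n)) :=
          ⟨Φz, by rintro _ ⟨n, rfl⟩; exact (hΦmem _ (hnn n)).2⟩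
        exact ⟨_, le_trans (hΦ _ (hnn 0)).1 (le_ciSup hb 0), tendsto_atTop_ciSup hm' hb⟩
    have h1 : Φ p = r := hconv g p r hnn hg hp hrt hr0
    have h2 : Filter.Tendsto (fun n => Φ (Φ (g n))) Filter.atTop (nhds p) := by
      have t := hg.comp (Filter.tendsto_add_atTop_nat 1)
      exact t.congr (fun n => hgr n)
    have h3 : Φ r = p := hconv (fun n => Φ (g n)) r p (fun n => (hΦ _ (hnn n)).1) hrt hr0 h2 hp
    rw [h1, h3]
  have horb : ∀ x : ℝ, 0 ≤ x →
      (Monotone (fun n => Φ^[2 * n] x) ∨ Antitone (fun n => Φ^[2 * n] x)) →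
      ∃ p : ℝ, Filter.Tendsto (fun n => Φ^[2 * n] x) Filter.atTop (nhds p) ∧
        αs ≤ p ∧ p ≤ βs := by
    intro x hx hmon
    have hnn : ∀ n, 0 ≤ Φ^[2 * n] x := fun n => hiter_nn x hx _
    have hub : ∀ n, Φ^[2 * (n + 1)] x ≤ Φz := fun n => by
      rw [hrec]; exact (hΦmem _ (hΦ _ (hnn n)).1).2
    have hlb : ∀ n, Φinf ≤ Φ^[2 * (n + 1)] x := fun n => by
      rw [hrec]; exact (hΦmem _ (hΦ _ (hnn n)).1).1.le
    obtain ⟨p, hpt⟩ : ∃ p, Filter.Tendsto (fun n => Φ^[2 * n] x) Filter.atTop (nhds p) := by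
      rcases hmon with hm | hm
      · have hb : BddAbove (Set.range fun n => Φ^[2 * n] x) := by
          refine ⟨max x Φz, ?_⟩
          rintro _ ⟨n, rfl⟩
          cases n with
          | zero => simp only [Nat.mul_zero, Function.iterate_zero_apply]; exact le_max_left x Φz
          | succ n => exact le_trans (hub n) (le_max_right _ _)
        exact ⟨_, tendsto_atTop_ciSup hm hb⟩
      · have hb : BddBelow (Set.range fun n => Φ^[2 * n] x) :=
          ⟨0, by rintro _ ⟨n, rfl⟩; exact hnn n⟩
        exact ⟨_, tendsto_atTop_ciInf hm hb⟩
    have hp0 : 0 ≤ p := ge_of_tendsto' hpt hnn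
    have hfix : Φ (Φ p) = p := hlim2 _ p hnn (fun n => hrec x n) hpt hp0 hmon
    have hpinf : Φinf ≤ p := by
      apply ge_of_tendsto hpt
      filter_upwards [Filter.eventually_ge_atTop 1] with n hn
      obtain ⟨m, rfl⟩ := Nat.exists_eq_succ_of_ne_zero (by omega : n ≠ 0)
      exact hlb m
    have hpz : p ≤ Φz := by
      apply le_of_tendsto hpt
      filter_upwards [Filter.eventually_ge_atTop 1] with n hn
      obtain ⟨m, rfl⟩ := Nat.exists_eq_succ_of_ne_zero (by omega : n ≠ 0)
      exact hub m
    exact ⟨p, hpt, hcycle p hpinf hpz hfix⟩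
  -- strict step inequalities outside [αs, βs]
  have hstep : ∀ x : ℝ, 0 ≤ x → x < αs → x < Φ (Φ x) := by
    intro x hx hxα
    by_contra hcon
    push_neg at hcon
    have hΦΦx : Φinf < Φ (Φ x) := (hΦmem _ (hΦ x hx).1).1
    have hxinf : Φinf < x := lt_of_lt_of_le hΦΦx hcon
    rcases eq_or_lt_of_le hcon with heq | hlt
    · have h := hcycle x hxinf.le (hxα.le.trans (hαβ.le.trans hβsΦz)) heq
      exact absurd h.1 (not_le.mpr hxα)
    · have hdec : ∀ n, Φ^[2 * (n + 1)] x < Φ^[2 * n] x := by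
        intro n
        induction n with
        | zero => rw [hrec]; simpa using hlt
        | succ n ih =>
          have h := hΦ2mono _ _ (hiter_nn x hx (2 * (n + 1))) (hiter_nn x hx (2 * n)) ih
          calc Φ^[2 * (n + 1 + 1)] x = Φ (Φ (Φ^[2 * (n + 1)] x)) := hrec x (n + 1)
            _ < Φ (Φ (Φ^[2 * n] x)) := h
            _ = Φ^[2 * (n + 1)] x := (hrec x n).symm
      have hanti : Antitone (fun n => Φ^[2 * n] x) := (strictAnti_nat_of_succ_lt hdec).antitone
      obtain ⟨p, hpt, hαp, _⟩ := horb x hx (Or.inr hanti)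
      have hpx : p ≤ x := le_of_tendsto hpt (Filter.Eventually.of_forall (fun n => by
        simpa using hanti (Nat.zero_le n)))
      linarith
  have hstep' : ∀ x : ℝ, βs < x → Φ (Φ x) < x := by
    intro x hxβ
    have hx : 0 ≤ x := hβs0.trans hxβ.le
    rcases le_or_gt x Φz with hxz | hxz
    · by_contra hcon
      push_neg at hcon
      rcases eq_or_lt_of_le hcon with heq | hlt
      · have h := hcycle x (hΦinfαs.trans (hαβ.le.trans hxβ.le)) hxz heq.symm
        exact absurd h.2 (not_le.mpr hxβ)
      · have hinc : ∀ n, Φ^[2 * n] x < Φ^[2 * (n + 1)] x := by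
          intro n
          induction n with
          | zero => rw [hrec]; simpa using hlt
          | succ n ih =>
            have h := hΦ2mono _ _ (hiter_nn x hx (2 * n)) (hiter_nn x hx (2 * (n + 1))) ih
            calc Φ^[2 * (n + 1)] x = Φ (Φ (Φ^[2 * n] x)) := hrec x n
              _ < Φ (Φ (Φ^[2 * (n + 1)] x)) := h
              _ = Φ^[2 * (n + 1 + 1)] x := (hrec x (n + 1)).symm
        have hmon : Monotone (fun n => Φ^[2 * n] x) := (strictMono_nat_of_lt_succ hinc).monotone
        obtain ⟨p, hpt, _, hpβ⟩ := horb x hx (Or.inl hmon)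
        have hxp : x ≤ p := ge_of_tendsto hpt (Filter.Eventually.of_forall (fun n => by
          simpa using hmon (Nat.zero_le n)))
        linarith
    · exact lt_of_le_of_lt (hΦmem _ (hΦ x hx).1).2 hxz
  -- assemble the three conclusions
  refine ⟨?_, ?_, ?_⟩
  · intro x y hx hy _ hxy hyx
    have hx' : Φinf < x ∧ x ≤ Φz := by
      have h := hΦmem y hy; rwa [hyx] at h
    have hy' : Φinf < y ∧ y ≤ Φz := by
      have h := hΦmem x hx; rwa [hxy] at h
    have h1 := hcycle x hx'.1.le hx'.2 (by rw [hxy, hyx])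
    have h2 := hcycle y hy'.1.le hy'.2 (by rw [hyx, hxy])
    exact ⟨Set.mem_Icc.mpr h1, Set.mem_Icc.mpr h2⟩
  · intro G0 hG0 hG0α
    have hlt : ∀ n, Φ^[2 * n] G0 < αs := by
      intro n
      induction n with
      | zero => simpa using hG0α
      | succ n ih =>
        rw [hrec]
        calc Φ (Φ (Φ^[2 * n] G0)) < Φ (Φ αs) := hΦ2mono _ _ (hiter_nn G0 hG0 _) hαs0 ih
          _ = αs := hfixα
    have hinc : ∀ n, Φ^[2 * n] G0 < Φ^[2 * (n + 1)] G0 := fun n => by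
      rw [hrec]; exact hstep _ (hiter_nn G0 hG0 _) (hlt n)
    have hsm : StrictMono (fun n => Φ^[2 * n] G0) := strictMono_nat_of_lt_succ hinc
    refine ⟨hsm, ?_⟩
    obtain ⟨p, hpt, hαp, _⟩ := horb G0 hG0 (Or.inl hsm.monotone)
    have hpα : p ≤ αs := le_of_tendsto hpt (Filter.Eventually.of_forall (fun n => (hlt n).le))
    have hpeq : p = αs := le_antisymm hpα hαp
    rwa [hpeq] at hpt
  · intro G0 hG0β
    have hG0 : 0 ≤ G0 := hβs0.trans hG0β.le
    have hgt : ∀ n, βs < Φ^[2 * n] G0 := by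
      intro n
      induction n with
      | zero => simpa using hG0β
      | succ n ih =>
        rw [hrec]
        calc βs = Φ (Φ βs) := hfixβ.symm
          _ < Φ (Φ (Φ^[2 * n] G0)) := hΦ2mono _ _ hβs0 (hiter_nn G0 hG0 _) ih
    have hdec : ∀ n, Φ^[2 * (n + 1)] G0 < Φ^[2 * n] G0 := fun n => by
      rw [hrec]; exact hstep' _ (hgt n)
    have hsa : StrictAnti (fun n => Φ^[2 * n] G0) := strictAnti_nat_of_succ_lt hdec
    refine ⟨hsa, ?_⟩
    obtain ⟨p, hpt, _, hpβ⟩ := horb G0 hG0 (Or.inr hsa.antitone)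
    have hβp : βs ≤ p := ge_of_tendsto hpt (Filter.Eventually.of_forall (fun n => (hgt n).le))
    have hpeq : p = βs := le_antisymm hpβ hβp
    rwa [hpeq] at hpt
end

section
/- Let μ₁, μ₂, b, a be positive reals with a > μ₁·μ₂ + b. Then there exists ε₀ > 0 such that for every ε ∈ (0, ε₀) the equation (ε·λ + μ₁)(ε·λ + μ₂) + b + a·e^{−λ} = 0 has a complex solution λ = μ + iν with μ > 0 and 0 < ν < π. Moreover these solutions can be chosen so that μ → ln(a/(μ₁·μ₂ + b)) and ν → π as ε → 0⁺. -/
/-! At `ε = 0` the root `α₀ + iπ` is simple: the `λ`-derivative there is `-a e^{-λ} = μ₁μ₂ + b ≠ 0`.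
The implicit function theorem therefore continues it to roots `λ(ε)` depending continuously on `ε`,
so `Re λ(ε) → α₀ > 0` and `Im λ(ε) → π`. The imaginary part of the equation,
`a e^{-μ} sin ν = εν(2εμ + μ₁ + μ₂)`, is positive for `ε > 0`, which forces `ν < π`. -/

open Filter Topology Complex

theorem ContDiffAt.exists_implicitFunction_of_hasDerivAt {𝕜 E : Type*} [RCLike 𝕜]
    [NormedAddCommGroup E] [NormedSpace 𝕜 E] [CompleteSpace E] {f : E × 𝕜 → 𝕜} {u : E × 𝕜}
    {c : 𝕜} (hf : ContDiffAt 𝕜 1 f u) (hc : HasDerivAt (fun z => f (u.1, z)) c u.2)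
    (hc0 : c ≠ 0) :
    ∃ ψ : E → 𝕜, Tendsto ψ (𝓝 u.1) (𝓝 u.2) ∧ ∀ᶠ x in 𝓝 u.1, f (x, ψ x) = f u := by
  have hstrict := hf.hasStrictFDerivAt one_ne_zero
  have hpartial : fderiv 𝕜 f u ∘L .inr 𝕜 E 𝕜 = ContinuousLinearMap.toSpanSingleton 𝕜 c :=
    (hstrict.hasFDerivAt.comp u.2 (hasFDerivAt_prodMk_right u.1 u.2)).unique hc.hasFDerivAt
  have hinv : (fderiv 𝕜 f u ∘L .inr 𝕜 E 𝕜).IsInvertible := by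
    refine ⟨ContinuousLinearEquiv.unitsEquivAut 𝕜 (Units.mk0 c hc0), ?_⟩
    rw [hpartial]
    ext
    simp
  exact ⟨_, hstrict.tendsto_implicitFunctionOfProdDomain hinv,
    hstrict.eventually_apply_implicitFunctionOfProdDomain hinv⟩

/-- The characteristic function at `p = (ε, λ)`. -/
noncomputable def characteristicFun (μ1 μ2 b a : ℂ) (p : ℂ × ℂ) : ℂ :=
  (p.1 * p.2 + μ1) * (p.1 * p.2 + μ2) + b + a * exp (-p.2)

theorem contDiff_characteristicFun (μ1 μ2 b a : ℂ) :
    ContDiff ℂ 1 (characteristicFun μ1 μ2 b a) := by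
  unfold characteristicFun
  fun_prop

theorem hasDerivAt_characteristicFun_zero (μ1 μ2 b a z : ℂ) :
    HasDerivAt (fun w => characteristicFun μ1 μ2 b a (0, w)) (-a * exp (-z)) z := by
  simp only [characteristicFun, zero_mul, zero_add]
  simpa using ((hasDerivAt_neg z).cexp.const_mul a).const_add (μ1 * μ2 + b)

theorem characteristicFun_zero_log_add_pi_mul_I {μ1 μ2 b a : ℝ} (h : 0 < a / (μ1 * μ2 + b)) :
    characteristicFun μ1 μ2 b a (0, Real.log (a / (μ1 * μ2 + b)) + Real.pi * I) = 0 := by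
  have ha : (a : ℂ) ≠ 0 := by
    exact_mod_cast fun ha0 : a = 0 => h.ne' (by simp [ha0])
  have hlog : exp (Real.log (a / (μ1 * μ2 + b))) = a / (μ1 * μ2 + b) := by
    rw [← ofReal_exp, Real.exp_log h]; push_cast; rfl
  simp only [characteristicFun, neg_add, exp_add, exp_neg, hlog, zero_mul, zero_add]
  rw [exp_pi_mul_I]
  field_simp
  ring

theorem characteristicFun_im (μ1 μ2 b a ε : ℝ) (z : ℂ) :
    (characteristicFun μ1 μ2 b a (ε, z)).im
      = ε * z.im * (2 * ε * z.re + μ1 + μ2) - a * Real.exp (-z.re) * Real.sin z.im := by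
  simp only [characteristicFun, add_im, mul_im, add_re, mul_re, ofReal_re, ofReal_im, zero_mul,
    sub_zero, add_zero, exp_im, exp_re, neg_re, neg_im, Real.sin_neg, Real.cos_neg, mul_neg]
  ring

theorem sin_im_pos_of_characteristicFun_eq_zero {μ1 μ2 b a ε : ℝ} {z : ℂ}
    (h : characteristicFun μ1 μ2 b a (ε, z) = 0) (hμ1 : 0 < μ1) (hμ2 : 0 < μ2) (ha : 0 < a)
    (hε : 0 < ε) (hre : 0 ≤ z.re) (him : 0 < z.im) : 0 < Real.sin z.im := by
  have him_eq := characteristicFun_im μ1 μ2 b a ε z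
  rw [h, zero_im] at him_eq
  have : 0 < a * Real.exp (-z.re) * Real.sin z.im := by
    have : 0 < ε * z.im * (2 * ε * z.re + μ1 + μ2) := by positivity
    linarith
  exact pos_of_mul_pos_right this (by positivity)

theorem Real.lt_pi_of_sin_pos {x : ℝ} (hx : 0 < Real.sin x) (h2π : x < 2 * Real.pi) :
    x < Real.pi := by
  by_contra! hπ
  have hsin := Real.sin_nonpos_of_nonpos_of_neg_pi_le (x := x - 2 * Real.pi) (by linarith)
    (by linarith)
  rw [Real.sin_sub_two_pi] at hsin
  linarith

theorem characteristic_root_small_eps_general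
    (μ1 μ2 b a : ℝ) (hμ1 : 0 < μ1) (hμ2 : 0 < μ2) (hb : 0 < b)
    (hgt : μ1 * μ2 + b < a) :
    ∃ ε0 > (0:ℝ), ∃ μ ν : ℝ → ℝ,
      (∀ ε : ℝ, 0 < ε → ε < ε0 →
        (((ε : ℂ) * ((μ ε : ℂ) + (ν ε : ℂ) * Complex.I) + (μ1 : ℂ)) *
            ((ε : ℂ) * ((μ ε : ℂ) + (ν ε : ℂ) * Complex.I) + (μ2 : ℂ)) +
          (b : ℂ) + (a : ℂ) * Complex.exp (-((μ ε : ℂ) + (ν ε : ℂ) * Complex.I)) = 0) ∧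
        0 < μ ε ∧ 0 < ν ε ∧ ν ε < Real.pi) ∧
      Filter.Tendsto μ (nhdsWithin 0 (Set.Ioi 0)) (nhds (Real.log (a / (μ1 * μ2 + b)))) ∧
      Filter.Tendsto ν (nhdsWithin 0 (Set.Ioi 0)) (nhds Real.pi) := by
  have hq : 0 < μ1 * μ2 + b := by positivity
  have ha : 0 < a := hq.trans hgt
  set α := Real.log (a / (μ1 * μ2 + b))
  have hα : 0 < α := Real.log_pos ((one_lt_div hq).2 hgt)
  obtain ⟨ψ, hψ, hψ_root⟩ := (contDiff_characteristicFun μ1 μ2 b a).contDiffAt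
    |>.exists_implicitFunction_of_hasDerivAt (u := (0, α + Real.pi * I))
      (hasDerivAt_characteristicFun_zero _ _ _ _ _) (by simp [ha.ne', exp_ne_zero])
  rw [characteristicFun_zero_log_add_pi_mul_I (div_pos ha hq)] at hψ_root
  have hofReal : Tendsto (fun ε : ℝ => (ε : ℂ)) (𝓝[>] 0) (𝓝 0) :=
    (continuous_ofReal.tendsto' 0 0 ofReal_zero).mono_left nhdsWithin_le_nhds
  have hψ_real := hψ.comp hofReal
  have hre : Tendsto (fun ε : ℝ => (ψ ε).re) (𝓝[>] 0) (𝓝 α) := by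
    simpa [Function.comp_def] using (continuous_re.tendsto _).comp hψ_real
  have him : Tendsto (fun ε : ℝ => (ψ ε).im) (𝓝[>] 0) (𝓝 Real.pi) := by
    simpa [Function.comp_def] using (continuous_im.tendsto _).comp hψ_real
  have hroots : ∀ᶠ ε : ℝ in 𝓝[>] 0, characteristicFun μ1 μ2 b a (ε, ψ ε) = 0 ∧
      0 < (ψ ε).re ∧ 0 < (ψ ε).im ∧ (ψ ε).im < Real.pi := by
    filter_upwards [hofReal.eventually hψ_root, hre.eventually (lt_mem_nhds hα),
      him.eventually (lt_mem_nhds Real.pi_pos),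
      him.eventually (gt_mem_nhds (by linarith [Real.pi_pos] : Real.pi < 2 * Real.pi)),
      self_mem_nhdsWithin]
      with ε hroot hre_pos him_pos him_lt hε
    refine ⟨hroot, hre_pos, him_pos, Real.lt_pi_of_sin_pos ?_ him_lt⟩
    exact sin_im_pos_of_characteristicFun_eq_zero hroot hμ1 hμ2 ha hε hre_pos.le him_pos
  obtain ⟨ε0, hε0, hsub⟩ := mem_nhdsGT_iff_exists_Ioo_subset.1 hroots
  refine ⟨ε0, hε0, fun ε => (ψ ε).re, fun ε => (ψ ε).im, fun ε h0 h1 => ?_, hre, him⟩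
  simp only [re_add_im]
  exact hsub ⟨h0, h1⟩

/-- For small ε > 0 the rescaled characteristic equation
(ελ+μ₁)(ελ+μ₂)+b+a·e^{-λ} = 0 has a root λ = μ+iν with μ > 0, 0 < ν < π, and these
roots converge to ln(a/(μ₁μ₂+b)) + iπ as ε → 0⁺. -/
theorem characteristic_root_small_eps
    (μ1 μ2 b a : ℝ) (hμ1 : 0 < μ1) (hμ2 : 0 < μ2) (hb : 0 < b) (ha : 0 < a)
    (hgt : μ1 * μ2 + b < a) :
    ∃ ε0 > (0:ℝ), ∃ μ ν : ℝ → ℝ,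
      (∀ ε : ℝ, 0 < ε → ε < ε0 →
        (((ε : ℂ) * ((μ ε : ℂ) + (ν ε : ℂ) * Complex.I) + (μ1 : ℂ)) *
            ((ε : ℂ) * ((μ ε : ℂ) + (ν ε : ℂ) * Complex.I) + (μ2 : ℂ)) +
          (b : ℂ) + (a : ℂ) * Complex.exp (-((μ ε : ℂ) + (ν ε : ℂ) * Complex.I)) = 0) ∧
        0 < μ ε ∧ 0 < ν ε ∧ ν ε < Real.pi) ∧
      Filter.Tendsto μ (nhdsWithin 0 (Set.Ioi 0)) (nhds (Real.log (a / (μ1 * μ2 + b)))) ∧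
      Filter.Tendsto ν (nhdsWithin 0 (Set.Ioi 0)) (nhds Real.pi) :=
  characteristic_root_small_eps_general μ1 μ2 b a hμ1 hμ2 hb hgt
end

section
/- Let μ₁, μ₂, b, a be positive reals with a > μ₁·μ₂ + b, and set α₀ := ln(a/(μ₁·μ₂ + b)). Suppose ε₀ > 0 and μ, ν : [0, ε₀) → ℝ are differentiable at 0 with μ(0) = α₀ and ν(0) = π, and satisfy ε·ν(ε)·(2ε·μ(ε) + μ₁ + μ₂) − a·e^{−μ(ε)}·sin(ν(ε)) = 0 for all ε ∈ [0, ε₀). Then ν′(0) = −π·(μ₁ + μ₂)/(μ₁·μ₂ + b) < 0; in particular ν(ε) < π for all sufficiently small ε > 0. -/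
open Filter Set Topology

/-!
Differentiating the identity at `ε = 0` kills every term carrying a factor `ε` or `sin π`, and
since `a e^{-α₀} = μ₁μ₂ + b` what remains is `π (μ₁ + μ₂) + (μ₁μ₂ + b) ν'(0) = 0`. A negative
right derivative then forces `ν ε < ν 0 = π` for small `ε > 0`.
-/

theorem HasDerivWithinAt.eq_zero_of_eventuallyEq_zero {𝕜 F : Type*} [NontriviallyNormedField 𝕜]
    [NormedAddCommGroup F] [NormedSpace 𝕜 F] {f : 𝕜 → F} {f' : F} {s : Set 𝕜} {x : 𝕜}
    (hf : HasDerivWithinAt f f' s x) (hs : UniqueDiffWithinAt 𝕜 s x) (hx : x ∈ s)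
    (h : f =ᶠ[𝓝[s] x] 0) : f' = 0 :=
  hs.eq_deriv s hf ((hasDerivWithinAt_const x s 0).congr_of_eventuallyEq h (h.eq_of_nhdsWithin hx))

theorem HasDerivWithinAt.eventually_lt_of_deriv_neg {f : ℝ → ℝ} {f' x : ℝ}
    (hf : HasDerivWithinAt f f' (Ici x) x) (hf' : f' < 0) : ∀ᶠ y in 𝓝[>] x, f y < f x := by
  have hslope := hf.limsup_slope_le hf'
  rw [Ici_sdiff_left] at hslope
  filter_upwards [hslope, self_mem_nhdsWithin] with y hy hxy
  rw [slope_def_field, div_lt_iff₀ (sub_pos.2 hxy)] at hy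
  linarith

theorem hasDerivWithinAt_zero_branch_imag {μ ν : ℝ → ℝ} {μ' ν' : ℝ} {s : Set ℝ}
    (hμ : HasDerivWithinAt μ μ' s 0) (hν : HasDerivWithinAt ν ν' s 0) (μ1 μ2 a : ℝ) :
    HasDerivWithinAt
      (fun ε => ε * ν ε * (2 * ε * μ ε + μ1 + μ2) - a * Real.exp (-(μ ε)) * Real.sin (ν ε))
      (ν 0 * (μ1 + μ2) + a * Real.exp (-(μ 0)) * (μ' * Real.sin (ν 0) - Real.cos (ν 0) * ν'))
      s 0 := by
  have hid := hasDerivWithinAt_id (0 : ℝ) s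
  have hlin := (((hid.const_mul 2).mul hμ).add_const μ1).add_const μ2
  exact ((hid.mul hν).mul hlin |>.sub ((hμ.neg.exp.const_mul a).mul hν.sin)).congr_deriv
    (by simp only [id, Pi.mul_apply, Pi.neg_apply]; ring)

theorem branch_derivative_negative_general
    (μ1 μ2 b a : ℝ) (hμ1 : 0 < μ1) (hμ2 : 0 < μ2) (hb : 0 < b) (ha : 0 < a)
    (ε0 : ℝ) (hε0 : 0 < ε0) (μ ν : ℝ → ℝ)
    (hμ0 : μ 0 = Real.log (a / (μ1 * μ2 + b))) (hν0 : ν 0 = Real.pi)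
    (μ'0 ν'0 : ℝ)
    (hμd : HasDerivWithinAt μ μ'0 (Set.Ici 0) 0)
    (hνd : HasDerivWithinAt ν ν'0 (Set.Ici 0) 0)
    (heq : ∀ ε : ℝ, 0 ≤ ε → ε < ε0 →
      ε * ν ε * (2 * ε * μ ε + μ1 + μ2) - a * Real.exp (-(μ ε)) * Real.sin (ν ε) = 0) :
    ν'0 = -(Real.pi * (μ1 + μ2)) / (μ1 * μ2 + b) ∧ ν'0 < 0 ∧
    ∀ᶠ ε in nhdsWithin 0 (Set.Ioi 0), ν ε < Real.pi := by
  have hc : 0 < μ1 * μ2 + b := by positivity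
  have hexp : a * Real.exp (-(μ 0)) = μ1 * μ2 + b := by
    rw [hμ0, Real.exp_neg, Real.exp_log (by positivity), inv_div]
    field_simp
  have hvanish : (fun ε => ε * ν ε * (2 * ε * μ ε + μ1 + μ2)
      - a * Real.exp (-(μ ε)) * Real.sin (ν ε)) =ᶠ[𝓝[Ici 0] 0] 0 := by
    filter_upwards [self_mem_nhdsWithin, mem_nhdsWithin_of_mem_nhds (Iio_mem_nhds hε0)]
      with ε hε hε' using heq ε hε hε'
  have hzero := (hasDerivWithinAt_zero_branch_imag hμd hνd μ1 μ2 a).eq_zero_of_eventuallyEq_zero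
    (uniqueDiffOn_Ici 0 0 self_mem_Ici) self_mem_Ici hvanish
  rw [hν0, Real.sin_pi, Real.cos_pi, hexp] at hzero
  have hν' : ν'0 = -(Real.pi * (μ1 + μ2)) / (μ1 * μ2 + b) := by
    field_simp
    linarith
  have hneg : ν'0 < 0 := hν' ▸ div_neg_of_neg_of_pos (neg_neg_of_pos (by positivity)) hc
  exact ⟨hν', hneg, hν0 ▸ hνd.eventually_lt_of_deriv_neg hneg⟩

/-- Along a branch λ(ε) = μ(ε)+iν(ε) of roots of the rescaled characteristic equation
with μ(0) = α₀, ν(0) = π, one has ν'(0) = -π(μ₁+μ₂)/(μ₁μ₂+b) < 0, so ν(ε) < π for all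
sufficiently small ε > 0. -/
theorem branch_derivative_negative
    (μ1 μ2 b a : ℝ) (hμ1 : 0 < μ1) (hμ2 : 0 < μ2) (hb : 0 < b) (ha : 0 < a)
    (hgt : μ1 * μ2 + b < a)
    (ε0 : ℝ) (hε0 : 0 < ε0) (μ ν : ℝ → ℝ)
    (hμ0 : μ 0 = Real.log (a / (μ1 * μ2 + b))) (hν0 : ν 0 = Real.pi)
    (μ'0 ν'0 : ℝ)
    (hμd : HasDerivWithinAt μ μ'0 (Set.Ici 0) 0)
    (hνd : HasDerivWithinAt ν ν'0 (Set.Ici 0) 0)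
    (heq : ∀ ε : ℝ, 0 ≤ ε → ε < ε0 →
      ε * ν ε * (2 * ε * μ ε + μ1 + μ2) - a * Real.exp (-(μ ε)) * Real.sin (ν ε) = 0) :
    ν'0 = -(Real.pi * (μ1 + μ2)) / (μ1 * μ2 + b) ∧ ν'0 < 0 ∧
    ∀ᶠ ε in nhdsWithin 0 (Set.Ioi 0), ν ε < Real.pi :=
  branch_derivative_negative_general μ1 μ2 b a hμ1 hμ2 hb ha ε0 hε0 μ ν hμ0 hν0 μ'0 ν'0 hμd hνd heq
end
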